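/- arXiv:1512.03253 — 9 statements merged into one kernel-verified Lean document; each statement's English description precedes it below -/
import Mathlib

section
/- Under the monotone-dependence hypothesis, a profile x ∈ S is a robust optimization equilibrium of the finite robust game with uncertainty set U = {P(f) : f ∈ U_f} if and only if x is a Nash equilibrium of the complete-information game with payoff matrix Q given by Q^i_{(j₁,…,j_N)} = P^i_{(j₁,…,j_N)}(hⁱ) for every player i and every joint action (j₁,…,j_N). -/
open MeasureTheory Matrix

namespace DRG

/-- A payoff matrix: assigns to each player `i` and each joint action a real payoff. -/
abbrev Payoff (N : ℕ) (a : Fin N → ℕ) : Type := Fin N → (∀ k : Fin N, Fin (a k)) → ℝ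

/-- A (not necessarily feasible) strategy profile. -/
abbrev Strategy (N : ℕ) (a : Fin N → ℕ) : Type := ∀ k : Fin N, Fin (a k) → ℝ

/-- Index type for the vectorization of a payoff matrix. -/
abbrev Idx (N : ℕ) (a : Fin N → ℕ) : Type := Fin N × (∀ k : Fin N, Fin (a k))

/-- Vectorization of a payoff matrix. -/
def vecP {N : ℕ} {a : Fin N → ℕ} (P : Payoff N a) : Idx N a → ℝ := fun q => P q.1 q.2

/-- The mixed-strategy simplex `S_n`. -/
def simplex (n : ℕ) : Set (Fin n → ℝ) := {x | (∀ j, 0 ≤ x j) ∧ ∑ j, x j = 1}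

/-- The set `S` of mixed strategy profiles. -/
def profiles (N : ℕ) (a : Fin N → ℕ) : Set (Strategy N a) :=
  {x | ∀ i, x i ∈ simplex (a i)}

/-- Expected payoff `π_i(P;x)`. -/
noncomputable def pay {N : ℕ} {a : Fin N → ℕ} (P : Payoff N a) (i : Fin N)
    (x : Strategy N a) : ℝ :=
  ∑ j : (∀ k : Fin N, Fin (a k)), P i j * ∏ k, x k (j k)

/-- Nash equilibrium of the complete information game with payoff matrix `P`. -/
def IsNashEq {N : ℕ} {a : Fin N → ℕ} (P : Payoff N a) (x : Strategy N a) : Prop :=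
  x ∈ profiles N a ∧ ∀ i : Fin N, ∀ u ∈ simplex (a i),
    pay P i (Function.update x i u) ≤ pay P i x

/-- Robust optimization equilibrium for uncertainty set `U`. -/
def IsRobustEq {N : ℕ} {a : Fin N → ℕ} (U : Set (Payoff N a)) (x : Strategy N a) : Prop :=
  x ∈ profiles N a ∧ ∀ i : Fin N, ∀ u ∈ simplex (a i),
    (⨅ P : U, pay (P : Payoff N a) i (Function.update x i u)) ≤
      ⨅ P : U, pay (P : Payoff N a) i x

/-- Conditional value at risk of the loss `L` at level `ε` under `Q`. -/
noncomputable def cvar {V : Type*} [MeasurableSpace V] (Q : Measure V) (ε : ℝ)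
    (L : V → ℝ) : ℝ :=
  ⨅ ζ : ℝ, (ζ + (1 / ε) * ∫ p, max (L p - ζ) 0 ∂Q)

/-- Distributionally robust optimization equilibrium for ambiguity set `𝓕` and
risk levels `ε`. -/
def IsDREq {N : ℕ} {a : Fin N → ℕ} (𝓕 : Set (Measure (Payoff N a))) (ε : Fin N → ℝ)
    (x : Strategy N a) : Prop :=
  x ∈ profiles N a ∧ ∀ i : Fin N, ∀ u ∈ simplex (a i),
    (⨆ Q : 𝓕, cvar (Q : Measure (Payoff N a)) (ε i) (fun P => - pay P i x)) ≤
      ⨆ Q : 𝓕, cvar (Q : Measure (Payoff N a)) (ε i)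
        (fun P => - pay P i (Function.update x i u))

/-- The ambiguity set `𝓕(W,h,m,s)`. -/
def ambiguity {N : ℕ} {a : Fin N → ℕ} (r : ℕ) (W : Matrix (Fin r) (Idx N a) ℝ)
    (h : Fin r → ℝ) (m : Idx N a → ℝ) (s : ℝ) : Set (Measure (Payoff N a)) :=
  {Q | IsProbabilityMeasure Q ∧ Integrable (fun p => p) Q ∧
    Q {P | ∀ t, (W *ᵥ vecP P) t ≤ h t} = 1 ∧
    vecP (∫ p, p ∂Q) = m ∧
    (∫ p, ∑ q, |vecP p q - m q| ∂Q) ≤ s}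

/-- The matrix `Y^i(x^{-i})` satisfying `vec(P)ᵀ Y^i(x^{-i}) uⁱ = π_i(P;(x^{-i},uⁱ))`. -/
noncomputable def Ymat {N : ℕ} {a : Fin N → ℕ} (i : Fin N) (x : Strategy N a) :
    Matrix (Idx N a) (Fin (a i)) ℝ :=
  Matrix.of fun q l =>
    if q.1 = i ∧ q.2 i = l then ∏ r ∈ Finset.univ.erase i, x r (q.2 r) else 0

/-- **Special class of robust games (extension): equivalence with a Nash game.**
Under the monotone-dependence hypothesis, a profile `x ∈ S` is a robust
optimization equilibrium of the finite robust game with uncertainty set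
`U = {P(f) : f ∈ U_f}` (where `U_f = K₁ × ⋯ × K_v` and each `K_ℓ` has a greatest
element `fmax ℓ` and a least element `fmin ℓ`) if and only if `x` is a Nash
equilibrium of the complete-information game with payoff matrix `Q` given by
`Q^i_{(j₁,…,j_N)} = P^i_{(j₁,…,j_N)}(hⁱ)`, where `hⁱ_ℓ = fmin ℓ` in the
nondecreasing case and `hⁱ_ℓ = fmax ℓ` in the nonincreasing case. -/
theorem robustEq_iff_nashEq_of_monotone {N v : ℕ} (hN : 1 ≤ N)
    (a : Fin N → ℕ) (ha : ∀ i, 1 ≤ a i)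
    (K : Fin v → Set ℝ) (fmin fmax : Fin v → ℝ)
    (hmin : ∀ ℓ, IsLeast (K ℓ) (fmin ℓ)) (hmax : ∀ ℓ, IsGreatest (K ℓ) (fmax ℓ))
    (P : (Fin v → ℝ) → Payoff N a) (hvec : Fin N → Fin v → ℝ)
    (hmono : ∀ (i : Fin N) (ℓ : Fin v),
      ((∀ (j : ∀ k : Fin N, Fin (a k)) (f g : Fin v → ℝ),
          (∀ t, f t ∈ K t) → (∀ t, g t ∈ K t) → (∀ t, t ≠ ℓ → f t = g t) →
          f ℓ ≤ g ℓ → P f i j ≤ P g i j) ∧ hvec i ℓ = fmin ℓ) ∨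
      ((∀ (j : ∀ k : Fin N, Fin (a k)) (f g : Fin v → ℝ),
          (∀ t, f t ∈ K t) → (∀ t, g t ∈ K t) → (∀ t, t ≠ ℓ → f t = g t) →
          f ℓ ≤ g ℓ → P g i j ≤ P f i j) ∧ hvec i ℓ = fmax ℓ))
    (x : Strategy N a) :
    IsRobustEq {Pm : Payoff N a | ∃ f : Fin v → ℝ, (∀ t, f t ∈ K t) ∧ Pm = P f} x ↔
      IsNashEq (fun i j => P (hvec i) i j) x := by
  set U : Set (Payoff N a) :=
    {Pm : Payoff N a | ∃ f : Fin v → ℝ, (∀ t, f t ∈ K t) ∧ Pm = P f} with hU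
  have hKh : ∀ (i : Fin N) (t : Fin v), hvec i t ∈ K t := by
    intro i t
    rcases hmono i t with ⟨_, h⟩ | ⟨_, h⟩
    · rw [h]; exact (hmin t).1
    · rw [h]; exact (hmax t).1
  have hmemU : ∀ i : Fin N, P (hvec i) ∈ U := fun i => ⟨hvec i, hKh i, rfl⟩
  -- pointwise minimality of the payoff at `hvec i`
  have hpt : ∀ (i : Fin N) (f : Fin v → ℝ), (∀ t, f t ∈ K t) →
      ∀ j, P (hvec i) i j ≤ P f i j := by
    intro i f hf j
    set F : ℕ → Fin v → ℝ := fun m t => if (t : ℕ) < m then hvec i t else f t with hF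
    have hFK : ∀ (m : ℕ) (t : Fin v), F m t ∈ K t := by
      intro m t
      simp only [hF]
      split
      · exact hKh i t
      · exact hf t
    have hstep : ∀ m : ℕ, P (F (m + 1)) i j ≤ P (F m) i j := by
      intro m
      by_cases hm : m < v
      · set ℓ : Fin v := ⟨m, hm⟩ with hℓ
        have hne : ∀ t : Fin v, t ≠ ℓ → F (m + 1) t = F m t := by
          intro t ht
          have htm : (t : ℕ) ≠ m := fun h => ht (Fin.ext h)
          simp only [hF]
          by_cases h1 : (t : ℕ) < m
          · simp [h1, Nat.lt_succ_of_lt h1]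
          · simp [h1, show ¬ (t : ℕ) < m + 1 by omega]
        have hFml : F m ℓ = f ℓ := by simp [hF, hℓ]
        have hFsl : F (m + 1) ℓ = hvec i ℓ := by simp [hF, hℓ]
        rcases hmono i ℓ with ⟨hmon, hval⟩ | ⟨hmon, hval⟩
        · have hle : F (m + 1) ℓ ≤ F m ℓ := by
            rw [hFml, hFsl, hval]
            exact (hmin ℓ).2 (hf ℓ)
          exact hmon j (F (m + 1)) (F m) (hFK _) (hFK _) hne hle
        · have hle : F m ℓ ≤ F (m + 1) ℓ := by
            rw [hFml, hFsl, hval]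
            exact (hmax ℓ).2 (hf ℓ)
          exact hmon j (F m) (F (m + 1)) (hFK _) (hFK _)
            (fun t ht => (hne t ht).symm) hle
      · have heq : F (m + 1) = F m := by
          funext t
          have : (t : ℕ) < v := t.isLt
          have h1 : (t : ℕ) < m := by omega
          simp [hF, h1, Nat.lt_succ_of_lt h1]
        rw [heq]
    have hchain : ∀ m : ℕ, P (F m) i j ≤ P (F 0) i j := by
      intro m
      induction m with
      | zero => exact le_refl _
      | succ n ih => exact le_trans (hstep n) ih
    have hF0 : F 0 = f := by funext t; simp [hF]
    have hFv : F v = hvec i := by funext t; simp [hF, t.isLt]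
    have := hchain v
    rwa [hF0, hFv] at this
  -- membership: updating a profile stays a profile
  have hupd : ∀ (hx : x ∈ profiles N a) (i : Fin N) (u : Fin (a i) → ℝ),
      u ∈ simplex (a i) → Function.update x i u ∈ profiles N a := by
    intro hx i u hu k
    by_cases h : k = i
    · subst h; rw [Function.update_self]; exact hu
    · rw [Function.update_of_ne h]; exact hx k
  -- the infimum over U equals the payoff at hvec i
  have hinf : ∀ (i : Fin N) (y : Strategy N a), y ∈ profiles N a →
      (⨅ Pm : U, pay (Pm : Payoff N a) i y) = pay (P (hvec i)) i y := by
    intro i y hy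
    have hlb : ∀ Pm : U, pay (P (hvec i)) i y ≤ pay (Pm : Payoff N a) i y := by
      rintro ⟨Pm, f, hf, rfl⟩
      apply Finset.sum_le_sum
      intro j _
      exact mul_le_mul_of_nonneg_right (hpt i f hf j)
        (Finset.prod_nonneg fun k _ => (hy k).1 (j k))
    haveI : Nonempty ↑U := ⟨⟨P (hvec i), hmemU i⟩⟩
    apply le_antisymm
    · refine ciInf_le ?_ (⟨P (hvec i), hmemU i⟩ : U)
      exact ⟨pay (P (hvec i)) i y, by rintro z ⟨Pm, rfl⟩; exact hlb Pm⟩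
    · exact le_ciInf hlb
  constructor
  · rintro ⟨hx, hineq⟩
    refine ⟨hx, fun i u hu => ?_⟩
    have h1 := hineq i u hu
    rw [hinf i _ (hupd hx i u hu), hinf i x hx] at h1
    exact h1
  · rintro ⟨hx, hineq⟩
    refine ⟨hx, fun i u hu => ?_⟩
    rw [hinf i _ (hupd hx i u hu), hinf i x hx]
    exact hineq i u hu

end DRG
end

section
/- Under the monotone-dependence hypothesis, for every player i and every profile x ∈ S one has inf_{f ∈ U_f} π_i(P(f); x) = π_i(P(hⁱ); x); in particular the infimum of player i's expected payoff over the uncertainty set U = {P(f) : f ∈ U_f} is attained at the parameter vector f = hⁱ. -/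
open MeasureTheory Matrix

namespace DRG

/-- **Attainment of the worst case at `hⁱ`.**
Under the monotone-dependence hypothesis, for every player `i` and every
profile `x ∈ S` one has `inf_{f ∈ U_f} π_i(P(f); x) = π_i(P(hⁱ); x)`; in
particular the infimum of player `i`'s expected payoff over the uncertainty set
`U = {P(f) : f ∈ U_f}` is attained at the parameter vector `f = hⁱ`. -/
theorem iInf_pay_eq_pay_hvec {N v : ℕ} (hN : 1 ≤ N)
    (a : Fin N → ℕ) (ha : ∀ i, 1 ≤ a i)
    (K : Fin v → Set ℝ) (fmin fmax : Fin v → ℝ)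
    (hmin : ∀ ℓ, IsLeast (K ℓ) (fmin ℓ)) (hmax : ∀ ℓ, IsGreatest (K ℓ) (fmax ℓ))
    (P : (Fin v → ℝ) → Payoff N a) (hvec : Fin N → Fin v → ℝ)
    (hmono : ∀ (i : Fin N) (ℓ : Fin v),
      ((∀ (j : ∀ k : Fin N, Fin (a k)) (f g : Fin v → ℝ),
          (∀ t, f t ∈ K t) → (∀ t, g t ∈ K t) → (∀ t, t ≠ ℓ → f t = g t) →
          f ℓ ≤ g ℓ → P f i j ≤ P g i j) ∧ hvec i ℓ = fmin ℓ) ∨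
      ((∀ (j : ∀ k : Fin N, Fin (a k)) (f g : Fin v → ℝ),
          (∀ t, f t ∈ K t) → (∀ t, g t ∈ K t) → (∀ t, t ≠ ℓ → f t = g t) →
          f ℓ ≤ g ℓ → P g i j ≤ P f i j) ∧ hvec i ℓ = fmax ℓ))
    (i : Fin N) (x : Strategy N a) (hx : x ∈ profiles N a) :
    (⨅ f : {f : Fin v → ℝ // ∀ t, f t ∈ K t}, pay (P f.1) i x) = pay (P (hvec i)) i x := by
  have hh : ∀ t, hvec i t ∈ K t := by
    intro t
    rcases hmono i t with ⟨_, h⟩ | ⟨_, h⟩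
    · rw [h]; exact (hmin t).1
    · rw [h]; exact (hmax t).1
  have key : ∀ (f : Fin v → ℝ), (∀ t, f t ∈ K t) →
      ∀ j, P (hvec i) i j ≤ P f i j := by
    intro f hf j
    have claim : ∀ s : Finset (Fin v),
        P (fun t => if t ∈ s then hvec i t else f t) i j ≤ P f i j := by
      intro s
      induction s using Finset.induction_on with
      | empty => simp
      | @insert ℓ s hℓs ih =>
        set g : Fin v → ℝ := fun t => if t ∈ s then hvec i t else f t with hg
        set g' : Fin v → ℝ := fun t => if t ∈ insert ℓ s then hvec i t else f t with hg'
        have hgK : ∀ t, g t ∈ K t := by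
          intro t; simp only [hg]; split
          · exact hh t
          · exact hf t
        have hg'K : ∀ t, g' t ∈ K t := by
          intro t; simp only [hg']; split
          · exact hh t
          · exact hf t
        have hoff : ∀ t, t ≠ ℓ → g' t = g t := by
          intro t ht
          simp only [hg, hg', Finset.mem_insert]
          rcases eq_or_ne (t ∈ s) True with _ | _ <;> by_cases hts : t ∈ s <;> simp [ht, hts]
        have hg'ℓ : g' ℓ = hvec i ℓ := by simp [hg']
        have hgℓ : g ℓ = f ℓ := by simp [hg, hℓs]
        have step : P g' i j ≤ P g i j := by
          rcases hmono i ℓ with ⟨hmon, hℓ⟩ | ⟨hmon, hℓ⟩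
          · refine hmon j g' g hg'K hgK hoff ?_
            rw [hg'ℓ, hgℓ, hℓ]
            exact (hmin ℓ).2 (hf ℓ)
          · refine hmon j g g' hgK hg'K (fun t ht => (hoff t ht).symm) ?_
            rw [hg'ℓ, hgℓ, hℓ]
            exact (hmax ℓ).2 (hf ℓ)
        exact step.trans ih
    have := claim Finset.univ
    simpa using this
  have hpay : ∀ (f : Fin v → ℝ), (∀ t, f t ∈ K t) →
      pay (P (hvec i)) i x ≤ pay (P f) i x := by
    intro f hf
    refine Finset.sum_le_sum fun j _ => ?_
    refine mul_le_mul_of_nonneg_right (key f hf j) ?_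
    exact Finset.prod_nonneg fun k _ => (hx k).1 (j k)
  haveI : Nonempty {f : Fin v → ℝ // ∀ t, f t ∈ K t} := ⟨⟨hvec i, hh⟩⟩
  refine le_antisymm ?_ (le_ciInf fun f => hpay f.1 f.2)
  have hbdd : BddBelow (Set.range fun f : {f : Fin v → ℝ // ∀ t, f t ∈ K t} =>
      pay (P f.1) i x) := by
    refine ⟨pay (P (hvec i)) i x, ?_⟩
    rintro y ⟨f, rfl⟩
    exact hpay f.1 f.2
  exact ciInf_le hbdd ⟨hvec i, hh⟩

end DRG
end

section
/- Let Ψ be a payoff matrix, take risk levels ε_i = 1 for every player i, and let 𝓕 = {Q : Q is a Borel probability measure on ℝ^d with finite first moment and ∫ p dQ(p) = vec(Ψ)}. Then x ∈ S is a distributionally robust optimization equilibrium if and only if x is a Nash equilibrium of the complete-information game with payoff matrix Ψ. -/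
open MeasureTheory Matrix Filter

namespace DRG

section Aux

lemma cvar_one {V : Type*} [MeasurableSpace V] (Q : Measure V) [IsProbabilityMeasure Q]
    (L : V → ℝ) (hL : Integrable L Q) : cvar Q 1 L = ∫ p, L p ∂Q := by
  have hint : ∀ ζ : ℝ, Integrable (fun p => max (L p - ζ) 0) Q := fun ζ =>
    (hL.sub (integrable_const ζ)).pos_part
  have hint' : ∀ ζ : ℝ, Integrable (fun p => max (ζ - L p) 0) Q := fun ζ =>
    ((integrable_const ζ).sub hL).pos_part
  have hterm : ∀ ζ : ℝ,
      ζ + (1/(1:ℝ)) * ∫ p, max (L p - ζ) 0 ∂Q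
        = (∫ p, L p ∂Q) + ∫ p, max (ζ - L p) 0 ∂Q := by
    intro ζ
    have heq : ∀ p, max (L p - ζ) 0 = (L p - ζ) + max (ζ - L p) 0 := by
      intro p
      rcases le_total (L p) ζ with h | h
      · rw [max_eq_right (by linarith), max_eq_left (by linarith)]; ring
      · rw [max_eq_left (by linarith), max_eq_right (by linarith)]; ring
    have h1 : ∫ p, max (L p - ζ) 0 ∂Q = ∫ p, ((L p - ζ) + max (ζ - L p) 0) ∂Q :=
      integral_congr_ae (Filter.Eventually.of_forall heq)
    have h2 : Integrable (fun p => L p - ζ) Q := hL.sub (integrable_const ζ)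
    rw [h1, integral_add h2 (hint' ζ),
      integral_sub hL (integrable_const ζ), integral_const]
    simp; ring
  have hbdd : BddBelow (Set.range fun ζ : ℝ =>
      ζ + (1/(1:ℝ)) * ∫ p, max (L p - ζ) 0 ∂Q) := by
    refine ⟨∫ p, L p ∂Q, ?_⟩
    rintro _ ⟨ζ, rfl⟩
    show ∫ p, L p ∂Q ≤ ζ + (1/(1:ℝ)) * ∫ p, max (L p - ζ) 0 ∂Q
    rw [hterm ζ]
    have : 0 ≤ ∫ p, max (ζ - L p) 0 ∂Q :=
      integral_nonneg fun p => le_max_right _ _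
    linarith
  refine le_antisymm ?_ (le_ciInf fun ζ => by
    show ∫ p, L p ∂Q ≤ ζ + (1/(1:ℝ)) * ∫ p, max (L p - ζ) 0 ∂Q
    rw [hterm ζ]
    have : 0 ≤ ∫ p, max (ζ - L p) 0 ∂Q := integral_nonneg fun p => le_max_right _ _
    linarith)
  -- upper bound via ζ → -∞
  have hlim : Tendsto (fun n : ℕ => ∫ p, max (-(n:ℝ) - L p) 0 ∂Q) atTop (nhds 0) := by
    have h0 : Tendsto (fun n : ℕ => ∫ p, max (-(n:ℝ) - L p) 0 ∂Q) atTop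
        (nhds (∫ p, (0:ℝ) ∂Q)) := by
      apply tendsto_integral_of_dominated_convergence (fun p => |L p|)
      · intro n; exact ((aestronglyMeasurable_const.sub hL.1).sup aestronglyMeasurable_const)
      · exact hL.abs
      · intro n
        filter_upwards with p
        rw [Real.norm_eq_abs, abs_of_nonneg (le_max_right _ _)]
        rcases le_total (L p) (-(n:ℝ)) with h | h
        · rw [max_eq_left (by linarith)]
          have : (0:ℝ) ≤ (n:ℝ) := Nat.cast_nonneg n
          cases abs_cases (L p) with
          | inl h' => linarith [h'.1]
          | inr h' => linarith [h'.1]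
        · rw [max_eq_right (by linarith)]; exact abs_nonneg _
      · filter_upwards with p
        apply tendsto_const_nhds.congr'
        obtain ⟨m, hm⟩ := exists_nat_ge (-(L p))
        filter_upwards [eventually_ge_atTop m] with n hn
        have : (m:ℝ) ≤ (n:ℝ) := Nat.cast_le.2 hn
        rw [max_eq_right (by linarith)]
    simpa using h0
  have hlim2 : Tendsto (fun n : ℕ =>
      (-(n:ℝ)) + (1/(1:ℝ)) * ∫ p, max (L p - (-(n:ℝ))) 0 ∂Q) atTop
      (nhds (∫ p, L p ∂Q)) := by
    have : (fun n : ℕ => (-(n:ℝ)) + (1/(1:ℝ)) * ∫ p, max (L p - (-(n:ℝ))) 0 ∂Q)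
        = fun n : ℕ => (∫ p, L p ∂Q) + ∫ p, max (-(n:ℝ) - L p) 0 ∂Q := by
      funext n; exact hterm (-(n:ℝ))
    rw [this]
    simpa using (tendsto_const_nhds.add hlim)
  have : cvar Q 1 L ≤ ∫ p, L p ∂Q := by
    refine le_of_tendsto_of_tendsto tendsto_const_nhds hlim2 ?_
    filter_upwards with n
    exact ciInf_le hbdd (-(n:ℝ))
  exact this

lemma coord_integrable {N : ℕ} {a : Fin N → ℕ} (Q : Measure (Payoff N a))
    (hQ : Integrable (fun p => p) Q) (i : Fin N) (j : ∀ k : Fin N, Fin (a k)) :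
    Integrable (fun p : Payoff N a => p i j) Q := by
  have := ((ContinuousLinearMap.proj (R := ℝ) (φ := fun _ : (∀ k : Fin N, Fin (a k)) => ℝ) j).comp
    (ContinuousLinearMap.proj (R := ℝ)
      (φ := fun _ : Fin N => (∀ k : Fin N, Fin (a k)) → ℝ) i)).integrable_comp hQ
  exact this

lemma coord_integral {N : ℕ} {a : Fin N → ℕ} (Q : Measure (Payoff N a))
    (hQ : Integrable (fun p => p) Q) (i : Fin N) (j : ∀ k : Fin N, Fin (a k)) :
    ∫ p, p i j ∂Q = (∫ p, p ∂Q) i j := by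
  have := ((ContinuousLinearMap.proj (R := ℝ) (φ := fun _ : (∀ k : Fin N, Fin (a k)) => ℝ) j).comp
    (ContinuousLinearMap.proj (R := ℝ)
      (φ := fun _ : Fin N => (∀ k : Fin N, Fin (a k)) → ℝ) i)).integral_comp_comm hQ
  exact this

lemma pay_integrable {N : ℕ} {a : Fin N → ℕ} (Q : Measure (Payoff N a))
    (hQ : Integrable (fun p => p) Q) (i : Fin N) (y : Strategy N a) :
    Integrable (fun P : Payoff N a => pay P i y) Q := by
  unfold pay
  exact integrable_finset_sum _ fun j _ => (coord_integrable Q hQ i j).mul_const _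

lemma pay_integral {N : ℕ} {a : Fin N → ℕ} (Q : Measure (Payoff N a))
    (hQ : Integrable (fun p => p) Q) (Ψ : Payoff N a) (hΨ : (∫ p, p ∂Q) = Ψ)
    (i : Fin N) (y : Strategy N a) :
    ∫ P, pay P i y ∂Q = pay Ψ i y := by
  unfold pay
  rw [integral_finset_sum _ fun j _ => (coord_integrable Q hQ i j).mul_const _]
  refine Finset.sum_congr rfl fun j _ => ?_
  rw [integral_mul_const, coord_integral Q hQ i j, hΨ]

end Aux

/-- **Distributionally robust games generalize Nash games.**
With risk levels `ε_i = 1` for every player and ambiguity set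
`𝓕 = {Q : Q Borel probability measure on ℝ^d with finite first moment and
∫ p dQ(p) = vec(Ψ)}`, a profile `x ∈ S` is a distributionally robust
optimization equilibrium iff it is a Nash equilibrium of the
complete-information game with payoff matrix `Ψ`. -/
theorem drEq_iff_nashEq_of_meanConstraint {N : ℕ} (hN : 1 ≤ N)
    (a : Fin N → ℕ) (ha : ∀ i, 1 ≤ a i) (Ψ : Payoff N a) (x : Strategy N a) :
    IsDREq {Q : Measure (Payoff N a) | IsProbabilityMeasure Q ∧
        Integrable (fun p => p) Q ∧ (∫ p, p ∂Q) = Ψ}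
      (fun _ => 1) x ↔ IsNashEq Ψ x := by
  classical
  set F : Set (Measure (Payoff N a)) := {Q : Measure (Payoff N a) | IsProbabilityMeasure Q ∧
      Integrable (fun p => p) Q ∧ (∫ p, p ∂Q) = Ψ} with hF
  haveI : Nonempty ↥F := by
    refine ⟨⟨Measure.dirac Ψ, ?_, ?_, ?_⟩⟩
    · infer_instance
    · exact (integrable_const Ψ).congr (by
        rw [Filter.eventuallyEq_iff_exists_mem]
        exact ⟨{Ψ}, by simp [Measure.dirac_apply_of_mem], fun p hp => hp ▸ rfl⟩)
    · exact integral_dirac _ Ψ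
  have key : ∀ (i : Fin N) (y : Strategy N a),
      (⨆ Q : F, cvar (Q : Measure (Payoff N a)) 1 (fun P => - pay P i y))
        = - pay Ψ i y := by
    intro i y
    have hconst : ∀ Q : F, cvar (Q : Measure (Payoff N a)) 1 (fun P => - pay P i y)
        = - pay Ψ i y := by
      rintro ⟨Q, hQp, hQi, hQm⟩
      haveI : IsProbabilityMeasure Q := hQp
      have hInt : Integrable (fun P : Payoff N a => - pay P i y) Q :=
        (pay_integrable Q hQi i y).neg
      rw [cvar_one Q _ hInt]
      rw [integral_neg, pay_integral Q hQi Ψ hQm i y]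
    rw [show (fun Q : F => cvar (Q : Measure (Payoff N a)) 1 (fun P => - pay P i y))
      = fun _ : F => - pay Ψ i y from funext hconst, ciSup_const]
  unfold IsDREq IsNashEq
  refine and_congr_right fun _ => ?_
  refine forall_congr' fun i => forall₂_congr fun u hu => ?_
  rw [key i x, key i (Function.update x i u)]
  exact neg_le_neg_iff


end DRG
end

section
/- Let W ∈ ℝ^{r×d} and h ∈ ℝ^r be such that the uncertainty set U = {P : W·vec(P) ≤ h} of payoff matrices is nonempty, take risk levels ε_i = 1 for every player i, and let 𝓕 = {Q : Q is a Borel probability measure on ℝ^d with finite first moment and W·(∫ p dQ(p)) ≤ h}. Then x ∈ S is a distributionally robust optimization equilibrium if and only if x is a robust optimization equilibrium of the robust game with uncertainty set U. -/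
/-!
At level `1`, CVaR is the expected loss: `ζ + E(L - ζ)⁺ = E L + E(ζ - L)⁺`, and the last term
tends to `0` as `ζ → -∞`. Since `π_i(·; y)` is linear in the payoff matrix, the expected payoff
under `Q` is the payoff at the mean of `Q`. So the worst-case CVaR over `𝓕` only sees the means of
the measures in `𝓕`, and these are exactly the points of `U` (Dirac measures realize each of
them). Hence `sup_{Q ∈ 𝓕} CVaR_1(-π_i(·; y)) = -inf_{P ∈ U} π_i(P; y)` for every profile `y`, and the
two equilibrium conditions coincide.
-/

open MeasureTheory Matrix

namespace DRG

open Filter Topology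

section CVaR

variable {V : Type*} [MeasurableSpace V] {Q : Measure V} {L : V → ℝ}

lemma tendsto_integral_max_sub_zero_atBot (hL : Integrable L Q) :
    Tendsto (fun ζ : ℝ => ∫ p, max (ζ - L p) 0 ∂Q) atBot (𝓝 0) := by
  have hlim := tendsto_integral_filter_of_dominated_convergence (μ := Q) (l := atBot)
    (F := fun ζ p => max (ζ - L p) 0) (f := fun _ => 0) (fun p => |L p|)
    (Eventually.of_forall fun ζ =>
      ((aestronglyMeasurable_const.sub hL.1).sup aestronglyMeasurable_const))
    (by
      filter_upwards [eventually_le_atBot 0] with ζ hζ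
      refine Eventually.of_forall fun p => ?_
      rw [Real.norm_of_nonneg (le_max_right _ _)]
      exact max_le (by linarith [neg_abs_le (L p)]) (abs_nonneg _))
    hL.abs
    (Eventually.of_forall fun p => tendsto_const_nhds.congr' <| by
      filter_upwards [eventually_le_atBot (L p)] with ζ hζ
      exact (max_eq_right (by linarith)).symm)
  simpa using hlim

lemma cvar_one_eq_integral [IsProbabilityMeasure Q] (hL : Integrable L Q) :
    cvar Q 1 L = ∫ p, L p ∂Q := by
  have hsplit : ∀ ζ : ℝ, ζ + 1 / 1 * ∫ p, max (L p - ζ) 0 ∂Q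
      = (∫ p, L p ∂Q) + ∫ p, max (ζ - L p) 0 ∂Q := by
    intro ζ
    have hsub : Integrable (fun p => L p - ζ) Q := hL.sub (integrable_const ζ)
    have hpos : ∀ p, max (L p - ζ) 0 = (L p - ζ) + max (ζ - L p) 0 := fun p => by
      have h := max_zero_sub_max_neg_zero_eq_self (L p - ζ)
      rw [neg_sub] at h
      linarith
    simp_rw [hpos]
    rw [integral_add hsub (by simpa using hsub.neg.pos_part), integral_sub hL (integrable_const ζ),
      integral_const]
    simp only [probReal_univ, smul_eq_mul, one_mul, div_one]
    ring
  have hnonneg : ∀ ζ : ℝ, 0 ≤ ∫ p, max (ζ - L p) 0 ∂Q :=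
    fun ζ => integral_nonneg fun p => le_max_right _ _
  have htend : Tendsto (fun ζ : ℝ => (∫ p, L p ∂Q) + ∫ p, max (ζ - L p) 0 ∂Q) atBot
      (𝓝 (∫ p, L p ∂Q)) := by
    simpa using tendsto_const_nhds.add (tendsto_integral_max_sub_zero_atBot hL)
  unfold cvar
  simp_rw [hsplit]
  exact ciInf_eq_of_forall_ge_of_forall_gt_exists_lt (fun ζ => le_add_of_nonneg_right (hnonneg ζ))
    fun w hw => (htend.eventually (gt_mem_nhds hw)).exists

end CVaR

section Game

variable {N : ℕ} {a : Fin N → ℕ}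

noncomputable def payCLM (i : Fin N) (y : Strategy N a) : Payoff N a →L[ℝ] ℝ :=
  ∑ j : ∀ k, Fin (a k), (∏ k, y k (j k)) •
    (ContinuousLinearMap.proj j : ((∀ k, Fin (a k)) → ℝ) →L[ℝ] ℝ).comp
      (ContinuousLinearMap.proj i : Payoff N a →L[ℝ] _)

@[simp]
lemma payCLM_apply (i : Fin N) (y : Strategy N a) (P : Payoff N a) :
    payCLM i y P = pay P i y := by
  simp [payCLM, pay, mul_comm]

variable {Q : Measure (Payoff N a)}

lemma integrable_pay (hQ : Integrable (fun p => p) Q) (i : Fin N) (y : Strategy N a) :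
    Integrable (fun P => pay P i y) Q := by
  simpa using (payCLM i y).integrable_comp hQ

lemma integral_pay (hQ : Integrable (fun p => p) Q) (i : Fin N) (y : Strategy N a) :
    ∫ P, pay P i y ∂Q = pay (∫ p, p ∂Q) i y := by
  simpa using (payCLM i y).integral_comp_comm hQ

def meanAmbiguity (U : Set (Payoff N a)) : Set (Measure (Payoff N a)) :=
  {Q | IsProbabilityMeasure Q ∧ Integrable (fun p => p) Q ∧ ∫ p, p ∂Q ∈ U}

lemma cvar_one_neg_pay_of_mem_meanAmbiguity {U : Set (Payoff N a)} (hQ : Q ∈ meanAmbiguity U)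
    (i : Fin N) (y : Strategy N a) :
    cvar Q 1 (fun P => -pay P i y) = -pay (∫ p, p ∂Q) i y := by
  obtain ⟨_, hint, -⟩ := hQ
  rw [cvar_one_eq_integral (L := fun P => -pay P i y) (integrable_pay hint i y).neg,
    integral_neg, integral_pay hint]

noncomputable def meanAmbiguity.mean (U : Set (Payoff N a)) (Q : meanAmbiguity U) : U :=
  ⟨∫ p, p ∂(Q : Measure (Payoff N a)), Q.2.2.2⟩

lemma meanAmbiguity.mean_surjective (U : Set (Payoff N a)) :
    Function.Surjective (meanAmbiguity.mean U) := by
  rintro ⟨P, hP⟩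
  refine ⟨⟨Measure.dirac P, inferInstance, integrable_dirac (by simp), ?_⟩, ?_⟩ <;>
    simp [meanAmbiguity.mean, integral_dirac, hP]

lemma iSup_cvar_one_neg_pay_meanAmbiguity (U : Set (Payoff N a)) (i : Fin N)
    (y : Strategy N a) :
    ⨆ Q : meanAmbiguity U, cvar (Q : Measure (Payoff N a)) 1 (fun P => -pay P i y) =
      -⨅ P : U, pay (P : Payoff N a) i y := by
  calc _ = ⨆ Q, -pay (meanAmbiguity.mean U Q : Payoff N a) i y :=
        iSup_congr fun Q => cvar_one_neg_pay_of_mem_meanAmbiguity Q.2 i y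
    _ = ⨆ P : U, -pay (P : Payoff N a) i y :=
        (meanAmbiguity.mean_surjective U).iSup_comp fun P : U => -pay (P : Payoff N a) i y
    _ = -⨅ P : U, pay (P : Payoff N a) i y := by
        simpa using (Real.mul_iInf_of_nonpos (by norm_num : (-1 : ℝ) ≤ 0)
          fun P : U => pay (P : Payoff N a) i y).symm

theorem isDREq_meanAmbiguity_one_iff (U : Set (Payoff N a)) (x : Strategy N a) :
    IsDREq (meanAmbiguity U) (fun _ => 1) x ↔ IsRobustEq U x := by
  refine and_congr_right fun _ => forall₃_congr fun i u _ => ?_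
  rw [iSup_cvar_one_neg_pay_meanAmbiguity, iSup_cvar_one_neg_pay_meanAmbiguity, neg_le_neg_iff]

end Game

theorem drEq_iff_robustEq_of_meanInU_general {N r : ℕ}
    (a : Fin N → ℕ)
    (W : Matrix (Fin r) (Idx N a) ℝ) (h : Fin r → ℝ)
    (x : Strategy N a) :
    IsDREq {Q : Measure (Payoff N a) | IsProbabilityMeasure Q ∧
        Integrable (fun p => p) Q ∧ ∀ t, (W *ᵥ vecP (∫ p, p ∂Q)) t ≤ h t}
      (fun _ => 1) x ↔
      IsRobustEq {P : Payoff N a | ∀ t, (W *ᵥ vecP P) t ≤ h t} x :=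
  isDREq_meanAmbiguity_one_iff {P | ∀ t, (W *ᵥ vecP P) t ≤ h t} x

/-- **Distributionally robust games generalize robust games.**
With risk levels `ε_i = 1` for every player and ambiguity set consisting of all
Borel probability measures with finite first moment whose mean lies in the
nonempty uncertainty set `U = {P : W·vec(P) ≤ h}`, a profile `x ∈ S` is a
distributionally robust optimization equilibrium iff it is a robust
optimization equilibrium of the robust game with uncertainty set `U`. -/
theorem drEq_iff_robustEq_of_meanInU {N r : ℕ} (hN : 1 ≤ N)
    (a : Fin N → ℕ) (ha : ∀ i, 1 ≤ a i)
    (W : Matrix (Fin r) (Idx N a) ℝ) (h : Fin r → ℝ)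
    (hne : {P : Payoff N a | ∀ t, (W *ᵥ vecP P) t ≤ h t}.Nonempty)
    (x : Strategy N a) :
    IsDREq {Q : Measure (Payoff N a) | IsProbabilityMeasure Q ∧
        Integrable (fun p => p) Q ∧ ∀ t, (W *ᵥ vecP (∫ p, p ∂Q)) t ≤ h t}
      (fun _ => 1) x ↔
      IsRobustEq {P : Payoff N a | ∀ t, (W *ᵥ vecP P) t ≤ h t} x :=
  drEq_iff_robustEq_of_meanInU_general a W h x

end DRG
end

section
/- Let U be a nonempty bounded set of payoff matrices. For each player i, the worst-case expected payoff function (x¹,…,x^N) ↦ inf_{P∈U} π_i(P;x¹,…,x^N), where the defining formula for π_i is extended to arbitrary vectors x^k ∈ ℝ^{a_k}, is real-valued and continuous on all of ℝ^{a₁+⋯+a_N}. -/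
open MeasureTheory Matrix

namespace DRG

/-- **Continuity of the worst-case expected payoff.**
Let `U` be a nonempty bounded set of payoff matrices.  For each player `i`, the
worst-case expected payoff function `x ↦ inf_{P∈U} π_i(P;x)` (with the formula
for `π_i` extended to arbitrary vectors `x^k ∈ ℝ^{a_k}`) is real-valued and
continuous on all of `ℝ^{a₁+⋯+a_N}`. -/
theorem continuous_iInf_pay {N : ℕ} (hN : 1 ≤ N)
    (a : Fin N → ℕ) (ha : ∀ i, 1 ≤ a i) (U : Set (Payoff N a))
    (hne : U.Nonempty) (hbdd : Bornology.IsBounded (vecP '' U)) (i : Fin N) :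
    Continuous fun x : Strategy N a => ⨅ P : U, pay (P : Payoff N a) i x := by
  haveI : Nonempty U := hne.to_subtype
  obtain ⟨C, hC⟩ := (isBounded_iff_forall_norm_le).mp hbdd
  set D : ℝ := max C 0 with hDdef
  have hD0 : (0:ℝ) ≤ D := le_max_right _ _
  have hC' : ∀ P ∈ U, ∀ j : (∀ k : Fin N, Fin (a k)), |P i j| ≤ D := by
    intro P hP j
    calc |P i j| = ‖vecP P (i, j)‖ := rfl
      _ ≤ ‖vecP P‖ := norm_le_pi_norm _ _
      _ ≤ C := hC _ ⟨P, hP, rfl⟩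
      _ ≤ D := le_max_left _ _
  -- key pointwise bound
  have key : ∀ P ∈ U, ∀ x y : Strategy N a,
      |pay P i x - pay P i y| ≤
        D * ∑ j : (∀ k : Fin N, Fin (a k)), |∏ k, x k (j k) - ∏ k, y k (j k)| := by
    intro P hP x y
    rw [pay, pay, ← Finset.sum_sub_distrib]
    refine le_trans (Finset.abs_sum_le_sum_abs _ _) ?_
    rw [Finset.mul_sum]
    refine Finset.sum_le_sum fun j _ => ?_
    rw [← mul_sub, abs_mul]
    exact mul_le_mul_of_nonneg_right (hC' P hP j) (abs_nonneg _)
  -- absolute bound for fixed x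
  have hbd : ∀ x : Strategy N a, ∀ P ∈ U,
      |pay P i x| ≤ D * ∑ j : (∀ k : Fin N, Fin (a k)), |∏ k, x k (j k)| := by
    intro x P hP
    rw [pay]
    refine le_trans (Finset.abs_sum_le_sum_abs _ _) ?_
    rw [Finset.mul_sum]
    refine Finset.sum_le_sum fun j _ => ?_
    rw [abs_mul]
    exact mul_le_mul_of_nonneg_right (hC' P hP j) (abs_nonneg _)
  have hBdd : ∀ x : Strategy N a,
      BddBelow (Set.range fun P : U => pay (P : Payoff N a) i x) := by
    intro x
    refine ⟨-(D * ∑ j : (∀ k : Fin N, Fin (a k)), |∏ k, x k (j k)|), ?_⟩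
    rintro _ ⟨P, rfl⟩
    have h1 := hbd x P P.2
    have h2 := neg_abs_le (pay (P : Payoff N a) i x)
    linarith
  -- one-sided infimum bound
  have half : ∀ x y : Strategy N a,
      (⨅ P : U, pay (P : Payoff N a) i x) - (⨅ P : U, pay (P : Payoff N a) i y) ≤
        D * ∑ j : (∀ k : Fin N, Fin (a k)), |∏ k, x k (j k) - ∏ k, y k (j k)| := by
    intro x y
    rw [sub_le_iff_le_add, ← sub_le_iff_le_add']
    refine le_ciInf fun P => ?_
    have h1 := ciInf_le (hBdd x) P
    have h2 := key P P.2 x y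
    have h3 := abs_sub_le_iff.mp h2
    linarith [h3.1, h3.2]
  have keyF : ∀ x y : Strategy N a,
      |(⨅ P : U, pay (P : Payoff N a) i x) - (⨅ P : U, pay (P : Payoff N a) i y)| ≤
        D * ∑ j : (∀ k : Fin N, Fin (a k)), |∏ k, x k (j k) - ∏ k, y k (j k)| := by
    intro x y
    rw [abs_sub_le_iff]
    refine ⟨half x y, ?_⟩
    have := half y x
    simpa [abs_sub_comm] using this
  rw [continuous_iff_continuousAt]
  intro x₀
  rw [ContinuousAt, ← tendsto_sub_nhds_zero_iff]
  have hgc : Continuous fun x : Strategy N a =>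
      D * ∑ j : (∀ k : Fin N, Fin (a k)), |∏ k, x k (j k) - ∏ k, x₀ k (j k)| := by
    refine continuous_const.mul (continuous_finset_sum _ fun j _ => ?_)
    exact ((Continuous.sub
      (continuous_finset_prod _ fun k _ =>
        (continuous_apply (j k)).comp (continuous_apply k))
      continuous_const).abs)
  have hg : Filter.Tendsto (fun x : Strategy N a =>
      D * ∑ j : (∀ k : Fin N, Fin (a k)), |∏ k, x k (j k) - ∏ k, x₀ k (j k)|)
      (nhds x₀) (nhds 0) := by
    have := hgc.tendsto x₀
    simpa using this
  exact squeeze_zero_norm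
    (fun x => by simpa [Real.norm_eq_abs] using keyF x x₀) hg

end DRG
end

section
/- Let U = {p ∈ ℝ^d : W p ≤ h} be a nonempty bounded polyhedron, let m ∈ U, let s = 0, and let the risk levels ε_i ∈ (0,1] be arbitrary. Then x ∈ S is a distributionally robust optimization equilibrium for the ambiguity set 𝓕(W,h,m,0) if and only if x is a Nash equilibrium of the complete-information game with the payoff matrix M satisfying vec(M) = m. -/
open MeasureTheory Matrix

namespace DRG

private lemma cvar_const_aux {ε c : ℝ} (hε : ε ∈ Set.Ioc (0:ℝ) 1) :
    (⨅ ζ : ℝ, (ζ + (1 / ε) * max (c - ζ) 0)) = c := by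
  obtain ⟨hε0, hε1⟩ := hε
  have hinv : (1:ℝ) ≤ 1 / ε := by
    rw [le_div_iff₀ hε0]; simpa using hε1
  have hlow : ∀ ζ : ℝ, c ≤ ζ + (1 / ε) * max (c - ζ) 0 := by
    intro ζ
    rcases le_or_gt c ζ with hcζ | hcζ
    · have : 0 ≤ (1 / ε) * max (c - ζ) 0 :=
        mul_nonneg (by positivity) (le_max_right _ _)
      linarith
    · have hmax : max (c - ζ) 0 = c - ζ := max_eq_left (by linarith)
      rw [hmax]
      nlinarith
  apply le_antisymm
  · have := ciInf_le (f := fun ζ : ℝ => ζ + (1 / ε) * max (c - ζ) 0)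
      ⟨c, by rintro y ⟨ζ, rfl⟩; exact hlow ζ⟩ c
    simpa using this
  · exact le_ciInf hlow

/-- **Special case: zero maximum distance.**
Let `U = {p : W p ≤ h}` be a nonempty bounded polyhedron, `m ∈ U`, `s = 0`, and
let the risk levels `ε_i ∈ (0,1]` be arbitrary.  Then `x ∈ S` is a
distributionally robust optimization equilibrium for the ambiguity set
`𝓕(W,h,m,0)` iff `x` is a Nash equilibrium of the complete-information game
with the payoff matrix `M` satisfying `vec(M) = m`. -/
theorem drEq_iff_nashEq_of_zeroDistance {N r : ℕ} (hN : 1 ≤ N)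
    (a : Fin N → ℕ) (ha : ∀ i, 1 ≤ a i)
    (W : Matrix (Fin r) (Idx N a) ℝ) (h : Fin r → ℝ) (m : Idx N a → ℝ)
    (hne : {p : Idx N a → ℝ | ∀ t, (W *ᵥ p) t ≤ h t}.Nonempty)
    (hbdd : Bornology.IsBounded {p : Idx N a → ℝ | ∀ t, (W *ᵥ p) t ≤ h t})
    (hm : ∀ t, (W *ᵥ m) t ≤ h t)
    (ε : Fin N → ℝ) (hε : ∀ i, ε i ∈ Set.Ioc (0 : ℝ) 1)
    (M : Payoff N a) (hM : vecP M = m) (x : Strategy N a) :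
    IsDREq (ambiguity r W h m 0) ε x ↔ IsNashEq M x := by
  -- the Dirac measure at M belongs to the ambiguity set
  have hMmem : (Measure.dirac M) ∈ ambiguity r W h m 0 := by
    refine ⟨Measure.dirac.isProbabilityMeasure, ?_, ?_, ?_, ?_⟩
    · exact (integrable_congr (by rw [MeasureTheory.ae_dirac_eq]; rfl)).mpr
        (integrable_const M)
    · exact Measure.dirac_apply_of_mem (by simpa [hM] using hm)
    · rw [integral_dirac, hM]
    · rw [integral_dirac]
      simp [hM]
  haveI : Nonempty (ambiguity r W h m 0) := ⟨⟨_, hMmem⟩⟩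
  -- every measure in the ambiguity set is a.e. equal to M
  have haeM : ∀ Q ∈ ambiguity r W h m 0, (fun p : Payoff N a => p) =ᵐ[Q] fun _ => M := by
    rintro Q ⟨hprob, hint, _hsupp, _hmean, hdist⟩
    set g : Payoff N a → ℝ := fun p => ∑ q : Idx N a, |vecP p q - m q| with hg
    have hgnon : ∀ p, 0 ≤ g p := fun p =>
      Finset.sum_nonneg fun q _ => abs_nonneg _
    have hgint : Integrable g Q := by
      apply integrable_finset_sum
      intro q _
      have h1 : Integrable (fun p : Payoff N a => p q.1 q.2) Q := by
        have := ((ContinuousLinearMap.proj (R := ℝ) q.2 (φ := fun _ => ℝ)).comp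
          (ContinuousLinearMap.proj (R := ℝ) q.1)).integrable_comp hint
        simpa using this
      exact (h1.sub (integrable_const (m q))).abs
    have hzero : ∫ p, g p ∂Q = 0 :=
      le_antisymm hdist (integral_nonneg hgnon)
    have hae : g =ᵐ[Q] 0 :=
      (integral_eq_zero_iff_of_nonneg hgnon hgint).mp hzero
    filter_upwards [hae] with p hp
    have hq : ∀ q : Idx N a, |vecP p q - m q| = 0 := by
      intro q
      have := (Finset.sum_eq_zero_iff_of_nonneg
        (fun q _ => abs_nonneg (vecP p q - m q))).mp hp q (Finset.mem_univ q)
      exact this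
    funext i j
    have := hq (i, j)
    have h2 : vecP p (i, j) = m (i, j) := by
      have := abs_eq_zero.mp this
      linarith
    have h3 : vecP M (i, j) = m (i, j) := by rw [hM]
    simpa [vecP] using h2.trans h3.symm
  -- cvar of the payoff loss under any measure in the set is the payoff under M
  have hcvar : ∀ (i : Fin N) (y : Strategy N a),
      (⨆ Q : ambiguity r W h m 0,
        cvar (Q : Measure (Payoff N a)) (ε i) (fun P => - pay P i y)) = - pay M i y := by
    intro i y
    have hval : ∀ Q : ambiguity r W h m 0,
        cvar (Q : Measure (Payoff N a)) (ε i) (fun P => - pay P i y) = - pay M i y := by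
      rintro ⟨Q, hQ⟩
      haveI : IsProbabilityMeasure Q := hQ.1
      have hae := haeM Q hQ
      have hint : ∀ ζ : ℝ, ∫ P, max (- pay P i y - ζ) 0 ∂Q
          = max (- pay M i y - ζ) 0 := by
        intro ζ
        have : (fun P : Payoff N a => max (- pay P i y - ζ) 0)
            =ᵐ[Q] fun _ => max (- pay M i y - ζ) 0 := by
          filter_upwards [hae] with p hp
          rw [hp]
        rw [integral_congr_ae this, integral_const]
        simp
      simp only [cvar, hint]
      exact cvar_const_aux (hε i)
    rw [iSup_congr hval]
    exact ciSup_const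
  constructor
  · rintro ⟨hx, hineq⟩
    refine ⟨hx, fun i u hu => ?_⟩
    have := hineq i u hu
    rw [hcvar i x, hcvar i (Function.update x i u)] at this
    linarith
  · rintro ⟨hx, hineq⟩
    refine ⟨hx, fun i u hu => ?_⟩
    rw [hcvar i x, hcvar i (Function.update x i u)]
    have := hineq i u hu
    linarith


end DRG
end

section
/- Suppose W ∈ ℝ^{r×d} and h ∈ ℝ^r are such that {p ∈ ℝ^d : W p ≤ h} = {vec(C)} is a singleton, for a payoff matrix C (the support single point); let m = vec(C), let s ≥ 0, and let the risk levels ε_i ∈ (0,1] be arbitrary. Then x ∈ S is a distributionally robust optimization equilibrium for the ambiguity set 𝓕(W,h,m,s) if and only if x is a Nash equilibrium of the complete-information game with payoff matrix C. -/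
/-!
When the support constraint `W p ≤ h` pins the payoff matrix down to the single point `C`, the
only admissible distribution is the Dirac mass at `C`: its mean is `vec C` and its `ℓ¹`
dispersion is `0 ≤ s`. For a deterministic loss, CVaR at any level `ε ∈ (0,1]` is the loss
itself, so the worst-case CVaR of player `i` is just `-π_i(C; ·)` and the equilibrium
conditions become the Nash conditions for `C`.
-/

open MeasureTheory Matrix

namespace MeasureTheory.Measure

theorem eq_dirac_of_apply_singleton_eq_one {α : Type*} [MeasurableSpace α]
    [MeasurableSingletonClass α] {μ : Measure α} [IsProbabilityMeasure μ] {c : α}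
    (h : μ {c} = 1) : μ = dirac c := by
  have hae : ∀ᵐ p ∂μ, p ∈ ({c} : Set α) :=
    mem_ae_iff.2 ((prob_compl_eq_zero_iff (measurableSet_singleton c)).2 h)
  rw [← restrict_eq_self_of_ae_mem hae, restrict_singleton, h, one_smul]

end MeasureTheory.Measure

namespace DRG

theorem cvar_dirac {V : Type*} [MeasurableSpace V] [MeasurableSingletonClass V] (c : V)
    {ε : ℝ} (hε₀ : 0 < ε) (hε₁ : ε ≤ 1) (L : V → ℝ) :
    cvar (Measure.dirac c) ε L = L c := by
  simp only [cvar, integral_dirac]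
  -- `1 ≤ 1 / ε` makes the excess term dominate `L c - ζ`, with equality at `ζ = L c`.
  have hlow : ∀ ζ : ℝ, L c ≤ ζ + 1 / ε * max (L c - ζ) 0 := fun ζ =>
    calc L c = ζ + (L c - ζ) := by ring
      _ ≤ ζ + max (L c - ζ) 0 := by gcongr; exact le_max_left _ _
      _ ≤ ζ + 1 / ε * max (L c - ζ) 0 := by
        gcongr; exact le_mul_of_one_le_left (le_max_right _ _) (one_le_one_div hε₀ hε₁)
  refine le_antisymm ?_ (le_ciInf hlow)
  calc ⨅ ζ : ℝ, ζ + 1 / ε * max (L c - ζ) 0 ≤ L c + 1 / ε * max (L c - L c) 0 :=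
        ciInf_le ⟨L c, Set.forall_mem_range.2 hlow⟩ (L c)
    _ = L c := by simp

theorem vecP_injective {N : ℕ} {a : Fin N → ℕ} : Function.Injective (vecP (N := N) (a := a)) :=
  fun _ _ hPQ => funext fun i => funext fun j => congrFun hPQ (i, j)

theorem ambiguity_eq_singleton_dirac {N r : ℕ} {a : Fin N → ℕ}
    {W : Matrix (Fin r) (Idx N a) ℝ} {h : Fin r → ℝ} {C : Payoff N a}
    (hsingle : {p : Idx N a → ℝ | ∀ t, (W *ᵥ p) t ≤ h t} = {vecP C}) {s : ℝ} (hs : 0 ≤ s) :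
    ambiguity r W h (vecP C) s = {Measure.dirac C} := by
  have hfeasible : {P : Payoff N a | ∀ t, (W *ᵥ vecP P) t ≤ h t} = {C} := by
    ext P
    change vecP P ∈ {p : Idx N a → ℝ | ∀ t, (W *ᵥ p) t ≤ h t} ↔ P = C
    rw [hsingle, Set.mem_singleton_iff, vecP_injective.eq_iff]
  ext Q
  constructor
  · rintro ⟨hprob, -, hsupp, -, -⟩
    rw [hfeasible] at hsupp
    exact Measure.eq_dirac_of_apply_singleton_eq_one hsupp
  · rintro rfl
    refine ⟨inferInstance, integrable_dirac enorm_lt_top, ?_, ?_, ?_⟩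
    · rw [hfeasible, Measure.dirac_apply_of_mem (Set.mem_singleton C)]
    · rw [integral_dirac]
    · simpa [integral_dirac] using hs

theorem isDREq_singleton_dirac_iff {N : ℕ} {a : Fin N → ℕ} (C : Payoff N a) {ε : Fin N → ℝ}
    (hε : ∀ i, ε i ∈ Set.Ioc (0 : ℝ) 1) (x : Strategy N a) :
    IsDREq {Measure.dirac C} ε x ↔ IsNashEq C x := by
  have hworst : ∀ i (y : Strategy N a),
      (⨆ Q : ({Measure.dirac C} : Set (Measure (Payoff N a))),
        cvar (Q : Measure (Payoff N a)) (ε i) (fun P => - pay P i y)) = - pay C i y :=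
    fun i y => by rw [ciSup_unique]; exact cvar_dirac C (hε i).1 (hε i).2 _
  simp only [IsDREq, IsNashEq, hworst, neg_le_neg_iff]

theorem drEq_iff_nashEq_of_singleSupport_general {N r : ℕ}
    (a : Fin N → ℕ)
    (W : Matrix (Fin r) (Idx N a) ℝ) (h : Fin r → ℝ) (C : Payoff N a)
    (hsingle : {p : Idx N a → ℝ | ∀ t, (W *ᵥ p) t ≤ h t} = {vecP C})
    (s : ℝ) (hs : 0 ≤ s)
    (ε : Fin N → ℝ) (hε : ∀ i, ε i ∈ Set.Ioc (0 : ℝ) 1) (x : Strategy N a) :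
    IsDREq (ambiguity r W h (vecP C) s) ε x ↔ IsNashEq C x := by
  rw [ambiguity_eq_singleton_dirac hsingle hs, isDREq_singleton_dirac_iff C hε x]

/-- **Special case: support single point.**
Suppose `W` and `h` are such that `{p : W p ≤ h} = {vec(C)}` is a singleton,
for a payoff matrix `C` (the support single point); let `m = vec(C)`, `s ≥ 0`,
and let the risk levels `ε_i ∈ (0,1]` be arbitrary.  Then `x ∈ S` is a
distributionally robust optimization equilibrium for the ambiguity set
`𝓕(W,h,m,s)` iff `x` is a Nash equilibrium of the complete-information game
with payoff matrix `C`. -/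
theorem drEq_iff_nashEq_of_singleSupport {N r : ℕ} (hN : 1 ≤ N)
    (a : Fin N → ℕ) (ha : ∀ i, 1 ≤ a i)
    (W : Matrix (Fin r) (Idx N a) ℝ) (h : Fin r → ℝ) (C : Payoff N a)
    (hsingle : {p : Idx N a → ℝ | ∀ t, (W *ᵥ p) t ≤ h t} = {vecP C})
    (s : ℝ) (hs : 0 ≤ s)
    (ε : Fin N → ℝ) (hε : ∀ i, ε i ∈ Set.Ioc (0 : ℝ) 1) (x : Strategy N a) :
    IsDREq (ambiguity r W h (vecP C) s) ε x ↔ IsNashEq C x :=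
  drEq_iff_nashEq_of_singleSupport_general a W h C hsingle s hs ε hε x

end DRG
end

section
/- Let U = {P : F·vec(P) ≤ d₀} (F ∈ ℝ^{r×d}, d₀ ∈ ℝ^r) be a nonempty bounded polyhedron of payoff matrices and let G(1),…,G(k) be its (finitely many) extreme points. Then x = (x¹,…,x^N) with xⁱ ∈ ℝ^{aᵢ} is a robust optimization equilibrium of the finite robust game with uncertainty set U if and only if for every player i there exist z_i ∈ ℝ, φ_i ∈ ℝ and θ^i ∈ ℝ^k such that: z_i = φ_i; z_i − π_i(G(ℓ); x¹,…,x^N) ≤ 0 for every ℓ ∈ {1,…,k}; eᵀxⁱ = 1; xⁱ ≥ 0; eᵀθ^i = 1; θ^i ≥ 0; and Σ_{ℓ=1}^k θ^i_ℓ · π_i(G(ℓ); (x^{-i}, e^i_{j_i})) − φ_i ≤ 0 for every j_i ∈ {1,…,aᵢ}, where e^i_{j_i} ∈ S_{aᵢ} denotes the pure strategy putting probability 1 on action j_i and e is the all-ones vector. -/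
open MeasureTheory Matrix

/-!
Since `pay · i y` is linear, Krein–Milman shows that its infimum over the polytope `U` is the
minimum over the extreme points `G ℓ`. Player `i`'s equilibrium condition thus says that in the
zero-sum matrix game in which player `i` mixes over pure strategies and an adversary mixes over
the extreme points, player `i` cannot secure more than `min_ℓ π_i(G ℓ; x)`. By von Neumann's
minimax theorem (a case of Sion's) this is equivalent to the existence of an adversary mixture
`θ` holding every pure strategy of player `i` to that value, which is the system.
-/

open Set

theorem Matrix.exists_mem_stdSimplex_vecMul_le {ι κ : Type*} [Fintype ι] [Fintype κ]
    [DecidableEq ι] [DecidableEq κ] [Nonempty ι] (A : Matrix ι κ ℝ) {v : ℝ}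
    (h : ∀ u ∈ stdSimplex ℝ κ, ∃ ℓ, (A *ᵥ u) ℓ ≤ v) :
    ∃ θ ∈ stdSimplex ℝ ι, ∀ j, (θ ᵥ* A) j ≤ v := by
  obtain ⟨ℓ₀⟩ := ‹Nonempty ι›
  cases isEmpty_or_nonempty κ with
  | inl _ => exact ⟨_, single_mem_stdSimplex ℝ ℓ₀, isEmptyElim⟩
  | inr _ =>
  obtain ⟨θ, hθ, u, hu, hsaddle⟩ := Sion.exists_isSaddlePointOn (f := fun θ u => θ ⬝ᵥ A *ᵥ u)
    ⟨_, single_mem_stdSimplex ℝ ℓ₀⟩ (convex_stdSimplex ℝ ι) (isCompact_stdSimplex ℝ ι)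
    (fun u _ => (continuous_id.dotProduct continuous_const).continuousOn.lowerSemicontinuousOn)
    (fun u _ =>
      (((dotProductBilin ℝ ℝ).flip (A *ᵥ u)).convexOn (convex_stdSimplex ℝ ι)).quasiconvexOn)
    (convex_stdSimplex ℝ κ) ⟨_, single_mem_stdSimplex ℝ (Classical.arbitrary κ)⟩
    (isCompact_stdSimplex ℝ κ)
    (fun θ _ => (continuous_const.dotProduct
      (continuous_const.matrix_mulVec continuous_id)).continuousOn.upperSemicontinuousOn)
    (fun θ _ =>
      ((dotProductBilin ℝ ℝ θ ∘ₗ A.mulVecLin).concaveOn (convex_stdSimplex ℝ κ)).quasiconcaveOn)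
  refine ⟨θ, hθ, fun j => ?_⟩
  obtain ⟨ℓ, hℓ⟩ := h u hu
  calc (θ ᵥ* A) j = θ ⬝ᵥ A *ᵥ Pi.single j 1 := by rw [dotProduct_mulVec, dotProduct_single_one]
    _ ≤ Pi.single ℓ 1 ⬝ᵥ A *ᵥ u :=
      hsaddle _ (single_mem_stdSimplex ℝ ℓ) _ (single_mem_stdSimplex ℝ j)
    _ = (A *ᵥ u) ℓ := by rw [single_dotProduct, one_mul]
    _ ≤ v := hℓ

theorem Matrix.forall_iInf_mulVec_le_iff {ι κ : Type*} [Fintype ι] [Fintype κ]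
    [DecidableEq ι] [DecidableEq κ] [Nonempty ι] (A : Matrix ι κ ℝ) (v : ℝ) :
    (∀ u ∈ stdSimplex ℝ κ, ⨅ ℓ, (A *ᵥ u) ℓ ≤ v) ↔
      ∃ θ ∈ stdSimplex ℝ ι, ∀ j, (θ ᵥ* A) j ≤ v := by
  refine ⟨fun h => A.exists_mem_stdSimplex_vecMul_le fun u hu => ?_, ?_⟩
  · obtain ⟨ℓ, hℓ⟩ := exists_eq_ciInf_of_finite (f := fun ℓ => (A *ᵥ u) ℓ)
    exact ⟨ℓ, hℓ ▸ h u hu⟩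
  · rintro ⟨θ, ⟨hθ0, hθ1⟩, hθ⟩ u ⟨hu0, hu1⟩
    calc ⨅ ℓ, (A *ᵥ u) ℓ = ∑ ℓ, θ ℓ * ⨅ ℓ', (A *ᵥ u) ℓ' := by
          rw [← Finset.sum_mul, hθ1, one_mul]
      _ ≤ θ ⬝ᵥ A *ᵥ u := Finset.sum_le_sum fun ℓ _ =>
          mul_le_mul_of_nonneg_left (ciInf_le (finite_range _).bddBelow ℓ) (hθ0 ℓ)
      _ = (θ ᵥ* A) ⬝ᵥ u := dotProduct_mulVec θ A u
      _ ≤ ∑ j, v * u j := Finset.sum_le_sum fun j _ =>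
          mul_le_mul_of_nonneg_right (hθ j) (hu0 j)
      _ = v := by rw [← Finset.mul_sum, hu1, mul_one]

section KreinMilman

variable {E ι : Type*} [AddCommGroup E] [Module ℝ E] [TopologicalSpace E] [T2Space E]
  [IsTopologicalAddGroup E] [ContinuousSMul ℝ E] [LocallyConvexSpace ℝ E] {U : Set E}
  {G : ι → E} {f : E → ℝ}

theorem IsCompact.nonempty_of_range_eq_extremePoints (hUc : IsCompact U) (hne : U.Nonempty)
    (hG : range G = U.extremePoints ℝ) : Nonempty ι :=
  range_nonempty_iff_nonempty.1 (hG ▸ hUc.extremePoints_nonempty hne)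

theorem IsCompact.le_of_forall_mem_extremePoints_le (hUc : IsCompact U) (hUconv : Convex ℝ U)
    (hf : IsLinearMap ℝ f) (hfc : Continuous f) {m : ℝ}
    (hm : ∀ p ∈ U.extremePoints ℝ, m ≤ f p) {P : E} (hP : P ∈ U) : m ≤ f P := by
  rw [← closure_convexHull_extremePoints hUc hUconv] at hP
  exact closure_minimal (convexHull_min hm (convex_halfSpace_ge hf m))
    (isClosed_le continuous_const hfc) hP

theorem IsCompact.iInf_eq_iInf_of_range_eq_extremePoints [Finite ι] (hUc : IsCompact U)
    (hUconv : Convex ℝ U) (hne : U.Nonempty) (hG : range G = U.extremePoints ℝ)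
    (hf : IsLinearMap ℝ f) (hfc : Continuous f) :
    ⨅ P : U, f P = ⨅ ℓ, f (G ℓ) := by
  have := hne.to_subtype
  have := hUc.nonempty_of_range_eq_extremePoints hne hG
  have hGU (ℓ : ι) : G ℓ ∈ U := extremePoints_subset (hG ▸ mem_range_self ℓ)
  have hlow (P : U) : ⨅ ℓ, f (G ℓ) ≤ f P := by
    refine hUc.le_of_forall_mem_extremePoints_le hUconv hf hfc ?_ P.2
    rw [← hG]
    rintro _ ⟨ℓ, rfl⟩
    exact ciInf_le (finite_range _).bddBelow ℓ
  exact le_antisymm (le_ciInf fun ℓ => ciInf_le ⟨_, forall_mem_range.2 hlow⟩ ⟨G ℓ, hGU ℓ⟩)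
    (le_ciInf hlow)

end KreinMilman

namespace DRG

variable {N : ℕ} {a : Fin N → ℕ}

noncomputable def vecPEquiv : Payoff N a ≃L[ℝ] (Idx N a → ℝ) :=
  (LinearEquiv.curry ℝ ℝ (Fin N) (∀ k : Fin N, Fin (a k))).symm.toContinuousLinearEquiv

theorem coe_vecPEquiv : ⇑(vecPEquiv : Payoff N a ≃L[ℝ] (Idx N a → ℝ)) = vecP := rfl

theorem isCompact_of_isBounded_image_vecP {U : Set (Payoff N a)} (hU : IsClosed U)
    (hbdd : Bornology.IsBounded (vecP '' U)) : IsCompact U := by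
  rw [← coe_vecPEquiv] at hbdd
  rw [← vecPEquiv.toHomeomorph.isCompact_image]
  exact Metric.isCompact_of_isClosed_isBounded (vecPEquiv.toHomeomorph.isClosed_image.2 hU) hbdd

theorem isLinearMap_pay (i : Fin N) (x : Strategy N a) :
    IsLinearMap ℝ fun P : Payoff N a => pay P i x := by
  constructor
  · intro P Q; simp [pay, add_mul, Finset.sum_add_distrib]
  · intro c P; simp [pay, Finset.mul_sum, mul_assoc]

theorem continuous_pay (i : Fin N) (x : Strategy N a) :
    Continuous fun P : Payoff N a => pay P i x := by
  unfold pay; fun_prop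

theorem pay_update (P : Payoff N a) (i : Fin N) (x : Strategy N a) (u : Fin (a i) → ℝ) :
    pay P i (Function.update x i u) =
      ∑ j : (∀ k, Fin (a k)), u (j i) * (P i j * ∏ k ∈ Finset.univ.erase i, x k (j k)) := by
  refine Finset.sum_congr rfl fun j _ => ?_
  rw [← Finset.mul_prod_erase _ _ (Finset.mem_univ i), Function.update_self,
    Finset.prod_congr rfl fun k hk => by rw [Function.update_of_ne (Finset.ne_of_mem_erase hk)]]
  ring

theorem pay_update_eq_sum (P : Payoff N a) (i : Fin N) (x : Strategy N a)
    (u : Fin (a i) → ℝ) :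
    pay P i (Function.update x i u) =
      ∑ l, u l * pay P i (Function.update x i (Pi.single l 1)) := by
  simp only [pay_update, Finset.mul_sum, Pi.single_apply]
  rw [Finset.sum_comm]
  refine Finset.sum_congr rfl fun j _ => ?_
  simp

variable {ι : Type*}

noncomputable def payMatrix (G : ι → Payoff N a) (i : Fin N) (x : Strategy N a) :
    Matrix ι (Fin (a i)) ℝ :=
  Matrix.of fun ℓ l => pay (G ℓ) i (Function.update x i (Pi.single l 1))

theorem payMatrix_mulVec (G : ι → Payoff N a) (i : Fin N) (x : Strategy N a)
    (u : Fin (a i) → ℝ) (ℓ : ι) :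
    (payMatrix G i x *ᵥ u) ℓ = pay (G ℓ) i (Function.update x i u) := by
  rw [pay_update_eq_sum]
  simp only [mulVec, dotProduct, payMatrix, of_apply]
  exact Finset.sum_congr rfl fun l _ => mul_comm _ _

theorem forall_iInf_pay_update_le_iff [Fintype ι] [DecidableEq ι] [Nonempty ι]
    (G : ι → Payoff N a) (i : Fin N) (x : Strategy N a) (v : ℝ) :
    (∀ u ∈ simplex (a i), ⨅ ℓ, pay (G ℓ) i (Function.update x i u) ≤ v) ↔
      ∃ θ ∈ stdSimplex ℝ ι,
        ∀ l, ∑ ℓ, θ ℓ * pay (G ℓ) i (Function.update x i (Pi.single l 1)) ≤ v := by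
  have key := (payMatrix G i x).forall_iInf_mulVec_le_iff v
  simp only [payMatrix_mulVec] at key
  exact key

theorem robustEq_iff_extremeSystem_general {N r k : ℕ}
    (a : Fin N → ℕ)
    (F : Matrix (Fin r) (Idx N a) ℝ) (d₀ : Fin r → ℝ)
    (hne : {P : Payoff N a | ∀ t, (F *ᵥ vecP P) t ≤ d₀ t}.Nonempty)
    (hbdd : Bornology.IsBounded
      (vecP '' {P : Payoff N a | ∀ t, (F *ᵥ vecP P) t ≤ d₀ t}))
    (G : Fin k → Payoff N a)
    (hG : Set.range G =
      Set.extremePoints ℝ {P : Payoff N a | ∀ t, (F *ᵥ vecP P) t ≤ d₀ t})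
    (x : Strategy N a) :
    IsRobustEq {P : Payoff N a | ∀ t, (F *ᵥ vecP P) t ≤ d₀ t} x ↔
      ∀ i : Fin N, ∃ (z φ : ℝ) (θ : Fin k → ℝ),
        z = φ ∧
        (∀ ℓ : Fin k, z - pay (G ℓ) i x ≤ 0) ∧
        (∑ l, x i l) = 1 ∧
        (∀ l, 0 ≤ x i l) ∧
        (∑ ℓ, θ ℓ) = 1 ∧
        (∀ ℓ, 0 ≤ θ ℓ) ∧
        (∀ j : Fin (a i),
          (∑ ℓ, θ ℓ *
            pay (G ℓ) i (Function.update x i (fun l => if l = j then 1 else 0)))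
            - φ ≤ 0) := by
  set U := {P : Payoff N a | ∀ t, (F *ᵥ vecP P) t ≤ d₀ t}
  have hU : U = (F.mulVecLin ∘ₗ vecPEquiv.toLinearMap) ⁻¹' Iic d₀ := rfl
  have hUconv : Convex ℝ U := hU ▸ (convex_Iic d₀).linear_preimage _
  have hUc : IsCompact U := isCompact_of_isBounded_image_vecP
    (hU ▸ isClosed_Iic.preimage (LinearMap.continuous_of_finiteDimensional _)) hbdd
  have := hUc.nonempty_of_range_eq_extremePoints hne hG
  have hinf (i : Fin N) (y : Strategy N a) :
      ⨅ P : U, pay (P : Payoff N a) i y = ⨅ ℓ, pay (G ℓ) i y :=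
    hUc.iInf_eq_iInf_of_range_eq_extremePoints hUconv hne hG (isLinearMap_pay i y)
      (continuous_pay i y)
  have hpure (i : Fin N) (j : Fin (a i)) :
      (fun l => if l = j then (1 : ℝ) else 0) = Pi.single j 1 :=
    funext fun l => (Pi.single_apply j 1 l).symm
  simp only [IsRobustEq, profiles, mem_ofPred_eq, hinf, forall_iInf_pay_update_le_iff, hpure,
    ← forall_and]
  refine forall_congr' fun i => ⟨?_, ?_⟩
  · rintro ⟨⟨hx0, hx1⟩, θ, ⟨hθ0, hθ1⟩, hθ⟩
    exact ⟨_, _, θ, rfl, fun ℓ => sub_nonpos.2 (ciInf_le (finite_range _).bddBelow ℓ), hx1, hx0,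
      hθ1, hθ0, fun j => sub_nonpos.2 (hθ j)⟩
  · rintro ⟨z, _, θ, rfl, hz, hx1, hx0, hθ1, hθ0, hθ⟩
    have hzv : z ≤ ⨅ ℓ, pay (G ℓ) i x := le_ciInf fun ℓ => sub_nonpos.1 (hz ℓ)
    exact ⟨⟨hx0, hx1⟩, θ, ⟨hθ0, hθ1⟩, fun j => (sub_nonpos.1 (hθ j)).trans hzv⟩

/-- **Computation of equilibria in robust finite games (Aghassi–Bertsimas).**
Let `U = {P : F·vec(P) ≤ d₀}` be a nonempty bounded polyhedron of payoff
matrices with extreme points `G(1),…,G(k)`.  Then `x` is a robust optimization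
equilibrium of the finite robust game with uncertainty set `U` iff for every
player `i` there exist `z_i, φ_i ∈ ℝ` and `θ^i ∈ ℝ^k` satisfying the
multilinear system below, where `e^i_{j}` denotes the pure strategy putting
probability 1 on action `j`. -/
theorem robustEq_iff_extremeSystem {N r k : ℕ} (hN : 1 ≤ N)
    (a : Fin N → ℕ) (ha : ∀ i, 1 ≤ a i)
    (F : Matrix (Fin r) (Idx N a) ℝ) (d₀ : Fin r → ℝ)
    (hne : {P : Payoff N a | ∀ t, (F *ᵥ vecP P) t ≤ d₀ t}.Nonempty)
    (hbdd : Bornology.IsBounded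
      (vecP '' {P : Payoff N a | ∀ t, (F *ᵥ vecP P) t ≤ d₀ t}))
    (G : Fin k → Payoff N a)
    (hG : Set.range G =
      Set.extremePoints ℝ {P : Payoff N a | ∀ t, (F *ᵥ vecP P) t ≤ d₀ t})
    (x : Strategy N a) :
    IsRobustEq {P : Payoff N a | ∀ t, (F *ᵥ vecP P) t ≤ d₀ t} x ↔
      ∀ i : Fin N, ∃ (z φ : ℝ) (θ : Fin k → ℝ),
        z = φ ∧
        (∀ ℓ : Fin k, z - pay (G ℓ) i x ≤ 0) ∧
        (∑ l, x i l) = 1 ∧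
        (∀ l, 0 ≤ x i l) ∧
        (∑ ℓ, θ ℓ) = 1 ∧
        (∀ ℓ, 0 ≤ θ ℓ) ∧
        (∀ j : Fin (a i),
          (∑ ℓ, θ ℓ *
            pay (G ℓ) i (Function.update x i (fun l => if l = j then 1 else 0)))
            - φ ≤ 0) :=
  robustEq_iff_extremeSystem_general a F d₀ hne hbdd G hG x

end DRG
end

section
/- Let W ∈ ℝ^{r×d} and h ∈ ℝ^r be such that U = {p ∈ ℝ^d : W p ≤ h} is nonempty and bounded, and let α ∈ ℝ, γ ≥ 0 and β, c, m ∈ ℝ^d. Then min_{p ∈ U} ( α + pᵀβ + γ·‖p − m‖₁ + pᵀc ) = max { α − mᵀδ + mᵀν + hᵀθ : δ, ν ∈ ℝ^d, θ ∈ ℝ^r, −δ + ν + Wᵀθ − β − c = 0, δ + ν ≤ γ·e, δ ≥ 0, ν ≥ 0, θ ≤ 0 }, and both the minimum and the maximum are attained. -/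
open Matrix



lemma sum_smul_dot {η : Type*} [Fintype η] {k : ℕ} (l : Fin k → ℝ) (a : Fin k → η → ℝ)
    (y : η → ℝ) : (∑ i, l i • a i) ⬝ᵥ y = ∑ i, l i * (a i ⬝ᵥ y) := by
  simp [dotProduct, Finset.sum_mul, Finset.mul_sum, smul_eq_mul]
  rw [Finset.sum_comm]
  exact Finset.sum_congr rfl fun i _ => Finset.sum_congr rfl fun q _ => (mul_assoc _ _ _)

theorem farkas_fin {η : Type*} [Fintype η] :
    ∀ (k : ℕ) (a : Fin k → η → ℝ) (b : η → ℝ),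
      (∃ l : Fin k → ℝ, (∀ i, 0 ≤ l i) ∧ b = ∑ i, l i • a i) ∨
      (∃ y : η → ℝ, (∀ i, a i ⬝ᵥ y ≤ 0) ∧ 0 < b ⬝ᵥ y) := by
  intro k
  induction k with
  | zero =>
    intro a b
    by_cases hb : b = 0
    · exact Or.inl ⟨0, fun i => le_refl _, by simp [hb]⟩
    · refine Or.inr ⟨b, fun i => i.elim0, ?_⟩
      have : b ⬝ᵥ b = ∑ q, b q * b q := rfl
      rw [this]
      rcases Function.ne_iff.1 hb with ⟨q, hq⟩
      refine Finset.sum_pos' (fun i _ => mul_self_nonneg _) ⟨q, Finset.mem_univ q, ?_⟩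
      simpa [Pi.zero_apply] using mul_self_pos.2 hq
  | succ k ih =>
    intro a b
    set a' : Fin k → η → ℝ := fun i => a i.castSucc with ha'
    set an : η → ℝ := a (Fin.last k) with han'
    rcases ih a' b with ⟨l, hl, hb⟩ | ⟨y, hy, hyb⟩
    · refine Or.inl ⟨Fin.snoc l 0, ?_, ?_⟩
      · intro i
        refine Fin.lastCases ?_ ?_ i
        · simp
        · intro j; simpa using hl j
      · rw [Fin.sum_univ_castSucc]
        simpa [Fin.snoc_castSucc, Fin.snoc_last] using hb
    · by_cases hany : an ⬝ᵥ y ≤ 0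
      · refine Or.inr ⟨y, ?_, hyb⟩
        intro i
        refine Fin.lastCases hany hy i
      · push_neg at hany
        have hK : an ⬝ᵥ y ≠ 0 := ne_of_gt hany
        set P : (η → ℝ) → η → ℝ := fun v => v - ((v ⬝ᵥ y) / (an ⬝ᵥ y)) • an with hP
        rcases ih (fun i => P (a' i)) (P b) with ⟨l, hl, hPb⟩ | ⟨z, hz, hzb⟩
        · set μ : ℝ := (b ⬝ᵥ y - ∑ i, l i * (a' i ⬝ᵥ y)) / (an ⬝ᵥ y) with hμdef
          have hμ : 0 ≤ μ := by
            apply div_nonneg _ hany.le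
            have h1 : ∑ i, l i * (a' i ⬝ᵥ y) ≤ 0 :=
              Finset.sum_nonpos fun i _ =>
                mul_nonpos_of_nonneg_of_nonpos (hl i) (hy i)
            linarith
          refine Or.inl ⟨Fin.snoc l μ, ?_, ?_⟩
          · intro i
            refine Fin.lastCases ?_ ?_ i
            · simpa using hμ
            · intro j; simpa using hl j
          · have key : ∀ q, b q = (∑ i, l i * a' i q) + μ * an q := by
              intro q
              have h1 := congrFun hPb q
              simp only [hP, Pi.sub_apply, Pi.smul_apply, smul_eq_mul,
                Finset.sum_apply] at h1
              have h2 : ∑ i, l i * (a' i q - (a' i ⬝ᵥ y) / (an ⬝ᵥ y) * an q)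
                  = (∑ i, l i * a' i q)
                    - (∑ i, l i * (a' i ⬝ᵥ y)) / (an ⬝ᵥ y) * an q := by
                rw [Finset.sum_div, Finset.sum_mul, ← Finset.sum_sub_distrib]
                exact Finset.sum_congr rfl fun i _ => by ring
              rw [h2] at h1
              have h3 : μ * an q = (b ⬝ᵥ y) / (an ⬝ᵥ y) * an q
                  - (∑ i, l i * (a' i ⬝ᵥ y)) / (an ⬝ᵥ y) * an q := by
                rw [hμdef]; ring
              linarith
            funext q
            rw [Fin.sum_univ_castSucc]
            simpa [Fin.snoc_castSucc, Fin.snoc_last, Finset.sum_apply,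
              Pi.smul_apply, smul_eq_mul, Pi.add_apply] using key q
        · refine Or.inr ⟨z - ((an ⬝ᵥ z) / (an ⬝ᵥ y)) • y, ?_, ?_⟩
          all_goals
            have key : ∀ v : η → ℝ,
                v ⬝ᵥ (z - ((an ⬝ᵥ z) / (an ⬝ᵥ y)) • y) = P v ⬝ᵥ z := by
              intro v
              rw [dotProduct_sub, dotProduct_smul, hP]
              rw [sub_dotProduct, smul_dotProduct]
              simp only [smul_eq_mul]
              field_simp
          · intro i
            refine Fin.lastCases ?_ ?_ i
            · rw [key]
              have : P an = 0 := by
                rw [hP]; simp [div_self hK]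
              rw [this]; simp
            · intro j
              rw [key]
              exact hz j
          · rw [key]
            exact hzb

theorem farkas {η ι : Type*} [Fintype η] [Fintype ι] (a : ι → η → ℝ) (b : η → ℝ) :
    (∃ l : ι → ℝ, (∀ i, 0 ≤ l i) ∧ b = ∑ i, l i • a i) ∨
    (∃ y : η → ℝ, (∀ i, a i ⬝ᵥ y ≤ 0) ∧ 0 < b ⬝ᵥ y) := by
  obtain ⟨e⟩ : Nonempty (ι ≃ Fin (Fintype.card ι)) := ⟨Fintype.equivFin ι⟩
  rcases farkas_fin (Fintype.card ι) (fun i => a (e.symm i)) b with ⟨l, hl, hb⟩ | h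
  · refine Or.inl ⟨fun i => l (e i), fun i => hl _, ?_⟩
    rw [hb]
    rw [← Equiv.sum_comp e.symm (fun j => l (e j) • a j)]
    simp
  · refine Or.inr ?_
    rcases h with ⟨y, hy, hyb⟩
    exact ⟨y, fun i => by simpa using hy (e i), hyb⟩

/-- Affine Farkas: if `A x ≤ b` is solvable and implies `g ⬝ x ≤ t`, then
`g` is a nonnegative combination of rows of `A` with `y ⬝ b ≤ t`. -/
theorem farkas_affine {η ι : Type*} [Fintype η] [Fintype ι]
    (A : ι → η → ℝ) (b : ι → ℝ) (g : η → ℝ) (t : ℝ)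
    (hfeas : ∃ x : η → ℝ, ∀ i, A i ⬝ᵥ x ≤ b i)
    (himp : ∀ x : η → ℝ, (∀ i, A i ⬝ᵥ x ≤ b i) → g ⬝ᵥ x ≤ t) :
    ∃ y : ι → ℝ, (∀ i, 0 ≤ y i) ∧ (∀ q, ∑ i, y i * A i q = g q) ∧
      ∑ i, y i * b i ≤ t := by
  -- homogenize: coordinates `Option η`, generators `Option ι`
  set gen : Option ι → Option η → ℝ := fun i =>
    Option.elim i (fun o => Option.elim o 1 (fun _ => 0))
      (fun i' => fun o => Option.elim o (b i') (fun q => A i' q)) with hgen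
  set g' : Option η → ℝ := fun o => Option.elim o t g with hg'
  rcases farkas gen g' with ⟨l, hl, hgl⟩ | ⟨z, hz, hzb⟩
  · refine ⟨fun i => l (some i), fun i => hl _, ?_, ?_⟩
    · intro q
      have h1 := congrFun hgl (some q)
      simp only [Finset.sum_apply, Pi.smul_apply, smul_eq_mul, hgen, hg'] at h1
      rw [Fintype.sum_option] at h1
      simpa using h1.symm
    · have h1 := congrFun hgl (none)
      simp only [Finset.sum_apply, Pi.smul_apply, smul_eq_mul, hgen, hg'] at h1
      rw [Fintype.sum_option] at h1
      simp only [Option.elim] at h1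
      have := hl none
      simp at h1
      linarith
  · exfalso
    set x : η → ℝ := fun q => z (some q) with hx
    set s : ℝ := z none with hs
    have hsle : s ≤ 0 := by
      have := hz none
      simp only [hgen, dotProduct] at this
      rw [Fintype.sum_option] at this
      simpa using this
    have hAi : ∀ i, A i ⬝ᵥ x + b i * s ≤ 0 := by
      intro i
      have := hz (some i)
      simp only [hgen, dotProduct] at this
      rw [Fintype.sum_option] at this
      simp only [Option.elim] at this
      rw [dotProduct]
      linarith [this]
    have hgx : 0 < g ⬝ᵥ x + t * s := by
      have := hzb
      simp only [hg', dotProduct] at this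
      rw [Fintype.sum_option] at this
      simp only [Option.elim] at this
      rw [dotProduct]
      linarith [this]
    rcases lt_or_eq_of_le hsle with hslt | hs0
    · -- s < 0 : rescale
      have hns : (-s) ≠ 0 := by linarith
      have hpos : (0:ℝ) < (-s)⁻¹ := inv_pos.2 (by linarith)
      set x' : η → ℝ := (-s)⁻¹ • x with hx'
      have hfe : ∀ i, A i ⬝ᵥ x' ≤ b i := by
        intro i
        rw [hx', dotProduct_smul, smul_eq_mul]
        have h2 : A i ⬝ᵥ x ≤ b i * (-s) := by nlinarith [hAi i]
        calc (-s)⁻¹ * (A i ⬝ᵥ x) ≤ (-s)⁻¹ * (b i * (-s)) := by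
              exact mul_le_mul_of_nonneg_left h2 hpos.le
          _ = b i := by
              rw [mul_comm (b i) (-s), ← mul_assoc, inv_mul_cancel₀ hns, one_mul]
      have h3 := himp x' hfe
      rw [hx', dotProduct_smul, smul_eq_mul] at h3
      have h4 : t * (-s) < g ⬝ᵥ x := by nlinarith
      have h5 : (-s)⁻¹ * (t * (-s)) < (-s)⁻¹ * (g ⬝ᵥ x) :=
        mul_lt_mul_of_pos_left h4 hpos
      rw [show (-s)⁻¹ * (t * (-s)) = t by
        rw [mul_comm t (-s), ← mul_assoc, inv_mul_cancel₀ hns, one_mul]] at h5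
      linarith
    · -- s = 0 : recession direction
      rcases hfeas with ⟨x₀, hx₀⟩
      rw [hs0] at hAi hgx
      simp only [mul_zero, add_zero] at hAi hgx
      set μ : ℝ := max 0 ((t - g ⬝ᵥ x₀ + 1) / (g ⬝ᵥ x)) with hμ
      have hμ0 : 0 ≤ μ := le_max_left _ _
      have hfe : ∀ i, A i ⬝ᵥ (x₀ + μ • x) ≤ b i := by
        intro i
        rw [dotProduct_add, dotProduct_smul, smul_eq_mul]
        nlinarith [hAi i, hx₀ i]
      have h3 := himp _ hfe
      rw [dotProduct_add, dotProduct_smul, smul_eq_mul] at h3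
      have h6 : (t - g ⬝ᵥ x₀ + 1) / (g ⬝ᵥ x) ≤ μ := le_max_right _ _
      have h7 : (t - g ⬝ᵥ x₀ + 1) ≤ μ * (g ⬝ᵥ x) := by
        rw [div_le_iff₀ hgx] at h6
        linarith
      linarith
lemma dot_exchange {d r : ℕ} (W : Matrix (Fin r) (Fin d) ℝ) (p : Fin d → ℝ) (θ : Fin r → ℝ) :
    ∑ t, (W *ᵥ p) t * θ t = ∑ q, p q * (Wᵀ *ᵥ θ) q := by
  simp only [mulVec, dotProduct, transpose_apply, Finset.sum_mul, Finset.mul_sum]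
  rw [Finset.sum_comm]
  exact Finset.sum_congr rfl fun q _ => Finset.sum_congr rfl fun t _ => by ring

lemma weak_duality {d r : ℕ} (W : Matrix (Fin r) (Fin d) ℝ) (h : Fin r → ℝ)
    (α γ : ℝ) (β c m : Fin d → ℝ) (p : Fin d → ℝ) (hp : ∀ t, (W *ᵥ p) t ≤ h t)
    (δ ν : Fin d → ℝ) (θ : Fin r → ℝ)
    (hcon : ∀ q, -δ q + ν q + (Wᵀ *ᵥ θ) q - β q - c q = 0)
    (hsum : ∀ q, δ q + ν q ≤ γ) (hδ : ∀ q, 0 ≤ δ q) (hν : ∀ q, 0 ≤ ν q)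
    (hθ : ∀ t, θ t ≤ 0) :
    α - m ⬝ᵥ δ + m ⬝ᵥ ν + h ⬝ᵥ θ
      ≤ α + p ⬝ᵥ β + γ * (∑ q, |p q - m q|) + p ⬝ᵥ c := by
  have e1 : h ⬝ᵥ θ ≤ ∑ t, (W *ᵥ p) t * θ t :=
    Finset.sum_le_sum fun t _ => mul_le_mul_of_nonpos_right (hp t) (hθ t)
  rw [dot_exchange] at e1
  have e2 : ∀ q, p q * (Wᵀ *ᵥ θ) q
      ≤ p q * β q + p q * c q + m q * δ q - m q * ν q + γ * |p q - m q| := by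
    intro q
    have hc := hcon q
    have h1 : p q - m q ≤ |p q - m q| := le_abs_self _
    have h2 : -(p q - m q) ≤ |p q - m q| := neg_le_abs _
    have h3 : 0 ≤ |p q - m q| := abs_nonneg _
    have hW : (Wᵀ *ᵥ θ) q = β q + c q + δ q - ν q := by linarith
    rw [hW]
    nlinarith [mul_le_mul_of_nonneg_right h1 (hδ q),
      mul_le_mul_of_nonneg_right h2 (hν q),
      mul_le_mul_of_nonneg_right (hsum q) h3]
  have e3 : ∑ q, p q * (Wᵀ *ᵥ θ) q
      ≤ ∑ q, (p q * β q + p q * c q + m q * δ q - m q * ν q + γ * |p q - m q|) :=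
    Finset.sum_le_sum fun q _ => e2 q
  have e4 : ∑ q, (p q * β q + p q * c q + m q * δ q - m q * ν q + γ * |p q - m q|)
      = p ⬝ᵥ β + p ⬝ᵥ c + m ⬝ᵥ δ - m ⬝ᵥ ν + γ * (∑ q, |p q - m q|) := by
    simp [dotProduct, Finset.sum_add_distrib, Finset.sum_sub_distrib, Finset.mul_sum]
  rw [e4] at e3
  linarith

lemma primal_attained {d r : ℕ} (W : Matrix (Fin r) (Fin d) ℝ) (h : Fin r → ℝ)
    (hne : {p : Fin d → ℝ | ∀ t, (W *ᵥ p) t ≤ h t}.Nonempty)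
    (hbdd : Bornology.IsBounded {p : Fin d → ℝ | ∀ t, (W *ᵥ p) t ≤ h t})
    (α γ : ℝ) (β c m : Fin d → ℝ) :
    ∃ p₀, (∀ t, (W *ᵥ p₀) t ≤ h t) ∧ ∀ p, (∀ t, (W *ᵥ p) t ≤ h t) →
      α + p₀ ⬝ᵥ β + γ * (∑ q, |p₀ q - m q|) + p₀ ⬝ᵥ c
        ≤ α + p ⬝ᵥ β + γ * (∑ q, |p q - m q|) + p ⬝ᵥ c := by
  set U := {p : Fin d → ℝ | ∀ t, (W *ᵥ p) t ≤ h t} with hU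
  have hUc : IsClosed U := by
    have : U = ⋂ t, {p : Fin d → ℝ | (W *ᵥ p) t ≤ h t} := by
      ext p; simp [hU, Set.mem_iInter]
    rw [this]
    refine isClosed_iInter fun t => isClosed_le ?_ continuous_const
    simp only [mulVec, dotProduct]
    exact continuous_finset_sum _ fun q _ => continuous_const.mul (continuous_apply q)
  have hcomp : IsCompact U := Metric.isCompact_of_isClosed_isBounded hUc hbdd
  have hdot : ∀ (w : Fin d → ℝ), Continuous (fun p : Fin d → ℝ => p ⬝ᵥ w) := fun w =>
    continuous_finset_sum _ fun q _ => (continuous_apply q).mul continuous_const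
  have habs : Continuous (fun p : Fin d → ℝ => ∑ q, |p q - m q|) :=
    continuous_finset_sum _ fun q _ => ((continuous_apply q).sub continuous_const).abs
  have hcont : Continuous (fun p : Fin d → ℝ =>
      α + p ⬝ᵥ β + γ * (∑ q, |p q - m q|) + p ⬝ᵥ c) :=
    ((continuous_const.add (hdot β)).add (continuous_const.mul habs)).add (hdot c)
  obtain ⟨p₀, hp₀U, hmin⟩ := hcomp.exists_isMinOn hne hcont.continuousOn
  exact ⟨p₀, hp₀U, fun p hp => hmin hp⟩
/-- **Strong LP duality for the inner worst-case problem.**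
Let `U = {p : W p ≤ h}` be a nonempty bounded polyhedron in `ℝ^d`, `α ∈ ℝ`,
`γ ≥ 0` and `β, c, m ∈ ℝ^d`.  Then
`min_{p ∈ U} (α + pᵀβ + γ‖p − m‖₁ + pᵀc)` equals
`max {α − mᵀδ + mᵀν + hᵀθ : −δ + ν + Wᵀθ − β − c = 0, δ + ν ≤ γe, δ,ν ≥ 0, θ ≤ 0}`,
and both the minimum and the maximum are attained. -/
theorem inner_problem_strong_duality {d r : ℕ}
    (W : Matrix (Fin r) (Fin d) ℝ) (h : Fin r → ℝ)
    (hne : {p : Fin d → ℝ | ∀ t, (W *ᵥ p) t ≤ h t}.Nonempty)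
    (hbdd : Bornology.IsBounded {p : Fin d → ℝ | ∀ t, (W *ᵥ p) t ≤ h t})
    (α γ : ℝ) (hγ : 0 ≤ γ) (β c m : Fin d → ℝ) :
    ∃ v : ℝ,
      IsLeast {z : ℝ | ∃ p : Fin d → ℝ, (∀ t, (W *ᵥ p) t ≤ h t) ∧
        z = α + p ⬝ᵥ β + γ * (∑ q, |p q - m q|) + p ⬝ᵥ c} v ∧
      IsGreatest {z : ℝ | ∃ (δ ν : Fin d → ℝ) (θ : Fin r → ℝ),
        (∀ q, -δ q + ν q + (Wᵀ *ᵥ θ) q - β q - c q = 0) ∧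
        (∀ q, δ q + ν q ≤ γ) ∧
        (∀ q, 0 ≤ δ q) ∧ (∀ q, 0 ≤ ν q) ∧ (∀ t, θ t ≤ 0) ∧
        z = α - m ⬝ᵥ δ + m ⬝ᵥ ν + h ⬝ᵥ θ} v := by
  obtain ⟨p₀, hp₀, hmin⟩ := primal_attained W h hne hbdd α γ β c m
  set v : ℝ := α + p₀ ⬝ᵥ β + γ * (∑ q, |p₀ q - m q|) + p₀ ⬝ᵥ c with hv
  -- set up the extended LP and apply affine Farkas
  set A : (Fin r ⊕ (Fin d ⊕ Fin d)) → (Fin d ⊕ Fin d) → ℝ := fun i =>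
    Sum.elim (fun t => Sum.elim (fun q => W t q) (fun _ => 0))
      (Sum.elim
        (fun q => Sum.elim (fun q' => if q = q' then 1 else 0)
          (fun q' => if q = q' then -1 else 0))
        (fun q => Sum.elim (fun q' => if q = q' then -1 else 0)
          (fun q' => if q = q' then -1 else 0))) i with hA
  set bb : (Fin r ⊕ (Fin d ⊕ Fin d)) → ℝ :=
    Sum.elim h (Sum.elim m (fun q => -m q)) with hbb
  set g : (Fin d ⊕ Fin d) → ℝ :=
    Sum.elim (fun q => -(β q + c q)) (fun _ => -γ) with hg
  have hfeas : ∃ x : (Fin d ⊕ Fin d) → ℝ, ∀ i, A i ⬝ᵥ x ≤ bb i := by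
    refine ⟨Sum.elim p₀ (fun q => |p₀ q - m q|), ?_⟩
    rintro (t | q | q)
    · have : A (Sum.inl t) ⬝ᵥ Sum.elim p₀ (fun q => |p₀ q - m q|) = (W *ᵥ p₀) t := by
        simp [hA, dotProduct, Fintype.sum_sum_type, mulVec]
      rw [this]; exact hp₀ t
    · have : A (Sum.inr (Sum.inl q)) ⬝ᵥ Sum.elim p₀ (fun q => |p₀ q - m q|)
          = p₀ q - |p₀ q - m q| := by
        simp [hA, dotProduct, Fintype.sum_sum_type, ite_mul, Finset.sum_ite_eq]
        ring
      rw [this]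
      have := le_abs_self (p₀ q - m q)
      simp only [hbb, Sum.elim_inr, Sum.elim_inl]
      linarith
    · have : A (Sum.inr (Sum.inr q)) ⬝ᵥ Sum.elim p₀ (fun q => |p₀ q - m q|)
          = -p₀ q - |p₀ q - m q| := by
        simp [hA, dotProduct, Fintype.sum_sum_type, ite_mul, Finset.sum_ite_eq]
        ring
      rw [this]
      have := neg_le_abs (p₀ q - m q)
      simp only [hbb, Sum.elim_inr, Sum.elim_inl]
      linarith
  have himp : ∀ x : (Fin d ⊕ Fin d) → ℝ, (∀ i, A i ⬝ᵥ x ≤ bb i) → g ⬝ᵥ x ≤ α - v := by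
    intro x hx
    set p : Fin d → ℝ := fun q => x (Sum.inl q) with hpdef
    set s : Fin d → ℝ := fun q => x (Sum.inr q) with hsdef
    have hWp : ∀ t, (W *ᵥ p) t ≤ h t := by
      intro t
      have h1 := hx (Sum.inl t)
      simp only [hA, hbb, dotProduct, Fintype.sum_sum_type, Sum.elim_inl,
        Sum.elim_inr, zero_mul, Finset.sum_const_zero, add_zero] at h1
      simpa [mulVec, dotProduct] using h1
    have habs : ∀ q, |p q - m q| ≤ s q := by
      intro q
      have h1 := hx (Sum.inr (Sum.inl q))
      have h2 := hx (Sum.inr (Sum.inr q))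
      simp only [hA, hbb, dotProduct, Fintype.sum_sum_type, Sum.elim_inl,
        Sum.elim_inr, ite_mul, one_mul, neg_one_mul, zero_mul,
        Finset.sum_ite_eq, Finset.mem_univ, if_true] at h1 h2
      rw [abs_le]
      constructor <;> [skip; skip] <;> · simp only [hpdef, hsdef]; linarith
    have hgx : g ⬝ᵥ x = -(p ⬝ᵥ β) - p ⬝ᵥ c - γ * ∑ q, s q := by
      simp only [hg, dotProduct, Fintype.sum_sum_type, Sum.elim_inl, Sum.elim_inr,
        Finset.mul_sum]
      rw [show (∑ q, -(β q + c q) * x (Sum.inl q))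
          = ∑ q, (-(p q * β q) + -(p q * c q)) from
        Finset.sum_congr rfl fun q _ => by simp only [hpdef]; ring]
      rw [Finset.sum_add_distrib]
      simp only [Finset.sum_neg_distrib]
      rw [show (∑ q, -γ * x (Sum.inr q)) = ∑ q, -(γ * s q) from
        Finset.sum_congr rfl fun q _ => by simp only [hsdef]; ring]
      simp only [Finset.sum_neg_distrib, dotProduct, Finset.mul_sum]
      ring
    rw [hgx]
    have h3 := hmin p hWp
    have h4 : γ * ∑ q, |p q - m q| ≤ γ * ∑ q, s q :=
      mul_le_mul_of_nonneg_left (Finset.sum_le_sum fun q _ => habs q) hγ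
    linarith
  obtain ⟨y, hy0, heq, hobj⟩ := farkas_affine A bb g (α - v) hfeas himp
  set θ : Fin r → ℝ := fun t => -(y (Sum.inl t)) with hθdef
  set δ : Fin d → ℝ := fun q => y (Sum.inr (Sum.inl q)) with hδdef
  set ν : Fin d → ℝ := fun q => y (Sum.inr (Sum.inr q)) with hνdef
  have hθ0 : ∀ t, θ t ≤ 0 := fun t => by
    simp only [hθdef, neg_nonpos]; exact hy0 _
  have hδ0 : ∀ q, 0 ≤ δ q := fun q => hy0 _
  have hν0 : ∀ q, 0 ≤ ν q := fun q => hy0 _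
  have hconq : ∀ q, -δ q + ν q + (Wᵀ *ᵥ θ) q - β q - c q = 0 := by
    intro q
    have h1 := heq (Sum.inl q)
    simp only [hA, hg, Fintype.sum_sum_type, Sum.elim_inl, Sum.elim_inr,
      mul_ite, mul_one, mul_neg_one, mul_zero,
      Finset.sum_ite_eq, Finset.sum_ite_eq', Finset.mem_univ, if_true] at h1
    have h2 : (Wᵀ *ᵥ θ) q = -∑ t, y (Sum.inl t) * W t q := by
      simp only [mulVec, dotProduct, transpose_apply, hθdef, mul_neg,
        Finset.sum_neg_distrib]
      congr 1
      exact Finset.sum_congr rfl fun t _ => by ring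
    rw [h2]
    simp only [hδdef, hνdef] at *
    linarith
  have hsumq : ∀ q, δ q + ν q ≤ γ := by
    intro q
    have h1 := heq (Sum.inr q)
    simp only [hA, hg, Fintype.sum_sum_type, Sum.elim_inl, Sum.elim_inr,
      mul_ite, mul_one, mul_neg_one, mul_zero, Finset.sum_const_zero, zero_add,
      Finset.sum_ite_eq, Finset.sum_ite_eq', Finset.mem_univ, if_true] at h1
    simp only [hδdef, hνdef]
    linarith
  have hzd : v ≤ α - m ⬝ᵥ δ + m ⬝ᵥ ν + h ⬝ᵥ θ := by
    have h1 : ∑ i, y i * bb i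
        = ∑ t, y (Sum.inl t) * h t + (m ⬝ᵥ δ - m ⬝ᵥ ν) := by
      simp only [hbb, Fintype.sum_sum_type, Sum.elim_inl, Sum.elim_inr, dotProduct]
      rw [show (∑ q, y (Sum.inr (Sum.inl q)) * m q) = ∑ q, m q * δ q from
        Finset.sum_congr rfl fun q _ => by simp only [hδdef]; ring]
      rw [show (∑ q, y (Sum.inr (Sum.inr q)) * -m q) = ∑ q, -(m q * ν q) from
        Finset.sum_congr rfl fun q _ => by simp only [hνdef]; ring]
      rw [Finset.sum_neg_distrib]
      ring
    have h2 : h ⬝ᵥ θ = -∑ t, y (Sum.inl t) * h t := by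
      simp only [dotProduct, hθdef, mul_neg, Finset.sum_neg_distrib]
      congr 1
      exact Finset.sum_congr rfl fun t _ => by ring
    rw [h1] at hobj
    rw [h2]
    linarith
  have hwd := weak_duality W h α γ β c m p₀ hp₀ δ ν θ hconq hsumq hδ0 hν0 hθ0
  simp only [← hv] at hwd
  refine ⟨v, ⟨⟨p₀, hp₀, hv⟩, ?_⟩, ⟨δ, ν, θ, hconq, hsumq, hδ0, hν0, hθ0, ?_⟩, ?_⟩
  · rintro z ⟨p, hp, rfl⟩
    exact hmin p hp
  · linarith
  · rintro z ⟨δ', ν', θ', hc', hs', hδ', hν', hθ', rfl⟩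
    have := weak_duality W h α γ β c m p₀ hp₀ δ' ν' θ' hc' hs' hδ' hν' hθ'
    simp only [← hv] at this
    exact this
end
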